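/- Suppose there exist two distinct cycles on the m × n grid with the same signature whose symmetric difference has s edges. Then for all positive integers a and b there exist two distinct cycles on the (a·m) × (b·n) grid with the same signature whose symmetric difference has exactly a·b·s edges. -/

import Mathlib

namespace Slitherlink

/-- Vertices of grids: integer points of the plane. -/
abbrev V : Type := ℤ × ℤ

/-- Edges: unordered pairs of vertices. -/
abbrev Edge : Type := Sym2 V

/-- `p` is a vertex of the `m × n` grid. -/
def gridVertex (m n : ℤ) (p : V) : Prop :=
  1 ≤ p.1 ∧ p.1 ≤ m ∧ 1 ≤ p.2 ∧ p.2 ≤ n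

/-- `e` is an edge of the `m × n` grid: a unit segment between grid vertices. -/
def gridEdge (m n : ℤ) (e : Edge) : Prop :=
  ∃ p q : V, e = s(p, q) ∧ gridVertex m n p ∧ gridVertex m n q ∧
    ((q.1 = p.1 + 1 ∧ q.2 = p.2) ∨ (q.1 = p.1 ∧ q.2 = p.2 + 1))

/-- The four boundary edges of the unit cell with lower-left corner `(a, b)`. -/
def cellEdges (a b : ℤ) : Set Edge :=
  {s((a, b), (a + 1, b)), s((a, b), (a, b + 1)),
   s((a + 1, b), (a + 1, b + 1)), s((a, b + 1), (a + 1, b + 1))}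

/-- `(a, b)` is the lower-left corner of a cell of the `m × n` grid. -/
def isCell (m n a b : ℤ) : Prop := 1 ≤ a ∧ a + 1 ≤ m ∧ 1 ≤ b ∧ b + 1 ≤ n

/-- Number of edges of `E` incident with the vertex `p`. -/
noncomputable def degree (E : Set Edge) (p : V) : ℕ := {e ∈ E | p ∈ e}.ncard

/-- Number of edges of `E` among the four boundary edges of the cell at `(a, b)`. -/
noncomputable def cellCount (E : Set Edge) (a b : ℤ) : ℕ := (E ∩ cellEdges a b).ncard

/-- A set of edges of the `m × n` grid is totally even if every vertex is incident with an
even number of its edges and every cell contains an even number of its edges. -/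
def TotallyEven (m n : ℤ) (E : Set Edge) : Prop :=
  (∀ e ∈ E, gridEdge m n e) ∧
  (∀ p : V, Even (degree E p)) ∧
  (∀ a b : ℤ, isCell m n a b → Even (cellCount E a b))

/-- The graph on `V` whose edges are the members of `C`. -/
def cycleGraph (C : Set Edge) : SimpleGraph V where
  Adj p q := p ≠ q ∧ s(p, q) ∈ C
  symm := by
    constructor
    intro p q h
    refine ⟨h.1.symm, ?_⟩
    rw [Sym2.eq_swap]
    exact h.2
  loopless := by constructor; intro p h; exact h.1 rfl

/-- `C` is a cycle in the `m × n` grid: a nonempty connected 2-regular subgraph. -/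
def IsCycle (m n : ℤ) (C : Set Edge) : Prop :=
  C.Nonempty ∧ (∀ e ∈ C, gridEdge m n e) ∧
  (∀ p : V, degree C p = 0 ∨ degree C p = 2) ∧
  (∀ p q : V, (∃ e ∈ C, p ∈ e) → (∃ e ∈ C, q ∈ e) → (cycleGraph C).Reachable p q)

/-- Two edge sets have the same signature on the `m × n` grid. -/
def SameSignature (m n : ℤ) (C₁ C₂ : Set Edge) : Prop :=
  ∀ a b : ℤ, isCell m n a b → cellCount C₁ a b = cellCount C₂ a b

/-- Membership in the closed diamond `D(i)` of the `n × n` grid. -/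
def inDiamond (n i : ℤ) (p : V) : Prop :=
  i + 1 ≤ p.1 + p.2 ∧ p.1 + p.2 ≤ 2 * n - i + 1 ∧ -i ≤ p.1 - p.2 ∧ p.1 - p.2 ≤ i

/-- The diamond edge set `B(i)`: all edges of the `n × n` grid contained in `D(i)`. -/
def diamondSet (n i : ℤ) : Set Edge :=
  {e | gridEdge n n e ∧ ∀ p ∈ e, inDiamond n i p}

/-- The symmetric difference of two edge sets. -/
def sdiff (A B : Set Edge) : Set Edge := (A \ B) ∪ (B \ A)


open scoped Classical

/-- horizontal unit edge -/
def horiz (x y : ℤ) : Edge := s((x,y),(x+1,y))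
/-- vertical unit edge -/
def vert (x y : ℤ) : Edge := s((x,y),(x,y+1))

lemma horiz_ne_vert {x y x' y' : ℤ} : horiz x y ≠ vert x' y' := by
  intro h
  rw [horiz, vert, Sym2.eq_iff] at h
  rcases h with ⟨h1, h2⟩ | ⟨h1, h2⟩ <;> simp only [Prod.ext_iff] at h1 h2 <;> omega

lemma horiz_inj {x y x' y' : ℤ} : horiz x y = horiz x' y' ↔ x = x' ∧ y = y' := by
  simp only [horiz, Sym2.eq_iff, Prod.mk.injEq]
  constructor
  · rintro (⟨⟨h1,h2⟩,⟨h3,h4⟩⟩|⟨⟨h1,h2⟩,⟨h3,h4⟩⟩) <;> omega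
  · rintro ⟨rfl, rfl⟩; left; exact ⟨⟨rfl, rfl⟩, ⟨rfl, rfl⟩⟩

lemma vert_inj {x y x' y' : ℤ} : vert x y = vert x' y' ↔ x = x' ∧ y = y' := by
  simp only [vert, Sym2.eq_iff, Prod.mk.injEq]
  constructor
  · rintro (⟨⟨h1,h2⟩,⟨h3,h4⟩⟩|⟨⟨h1,h2⟩,⟨h3,h4⟩⟩) <;> omega
  · rintro ⟨rfl, rfl⟩; left; exact ⟨⟨rfl, rfl⟩, ⟨rfl, rfl⟩⟩

lemma mem_horiz {p : V} {x y : ℤ} : p ∈ horiz x y ↔ p = (x,y) ∨ p = (x+1,y) := by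
  simp [horiz, Sym2.mem_iff]

lemma mem_vert {p : V} {x y : ℤ} : p ∈ vert x y ↔ p = (x,y) ∨ p = (x,y+1) := by
  simp [vert, Sym2.mem_iff]

lemma gridEdge_horiz_iff {m n x y : ℤ} :
    gridEdge m n (horiz x y) ↔ 1 ≤ x ∧ x + 1 ≤ m ∧ 1 ≤ y ∧ y ≤ n := by
  constructor
  · rintro ⟨p, q, heq, hp, hq, hdir⟩
    rw [horiz, Sym2.eq_iff] at heq
    rcases heq with ⟨h1, h2⟩ | ⟨h1, h2⟩ <;>
      rcases hdir with ⟨d1, d2⟩ | ⟨d1, d2⟩ <;>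
      obtain ⟨hp1, hp2, hp3, hp4⟩ := hp <;>
      obtain ⟨hq1, hq2, hq3, hq4⟩ := hq <;>
      simp only [Prod.ext_iff] at h1 h2 <;>
      refine ⟨by omega, by omega, by omega, by omega⟩
  · rintro ⟨h1, h2, h3, h4⟩
    exact ⟨(x,y), (x+1,y), rfl, ⟨h1, by omega, h3, h4⟩, ⟨by omega, by omega, h3, h4⟩,
      Or.inl ⟨rfl, rfl⟩⟩

lemma gridEdge_vert_iff {m n x y : ℤ} :
    gridEdge m n (vert x y) ↔ 1 ≤ x ∧ x ≤ m ∧ 1 ≤ y ∧ y + 1 ≤ n := by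
  constructor
  · rintro ⟨p, q, heq, hp, hq, hdir⟩
    rw [vert, Sym2.eq_iff] at heq
    rcases heq with ⟨h1, h2⟩ | ⟨h1, h2⟩ <;>
      rcases hdir with ⟨d1, d2⟩ | ⟨d1, d2⟩ <;>
      obtain ⟨hp1, hp2, hp3, hp4⟩ := hp <;>
      obtain ⟨hq1, hq2, hq3, hq4⟩ := hq <;>
      simp only [Prod.ext_iff] at h1 h2 <;>
      refine ⟨by omega, by omega, by omega, by omega⟩
  · rintro ⟨h1, h2, h3, h4⟩
    exact ⟨(x,y), (x,y+1), rfl, ⟨h1, h2, h3, by omega⟩, ⟨h1, h2, by omega, h4⟩,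
      Or.inr ⟨rfl, rfl⟩⟩

lemma gridEdge_cases {m n : ℤ} {e : Edge} (h : gridEdge m n e) :
    (∃ x y, e = horiz x y) ∨ (∃ x y, e = vert x y) := by
  obtain ⟨p, q, heq, hp, hq, hdir⟩ := h
  rcases hdir with ⟨d1, d2⟩ | ⟨d1, d2⟩
  · left
    refine ⟨p.1, p.2, ?_⟩
    rw [heq, horiz, show q = (p.1 + 1, p.2) from Prod.ext_iff.mpr ⟨d1, d2⟩]
  · right
    refine ⟨p.1, p.2, ?_⟩
    rw [heq, vert, show q = (p.1, p.2 + 1) from Prod.ext_iff.mpr ⟨d1, d2⟩]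


noncomputable def ind (E : Set Edge) (e : Edge) : ℕ := if e ∈ E then 1 else 0

lemma ind_of_mem {E : Set Edge} {e : Edge} (h : e ∈ E) : ind E e = 1 := if_pos h
lemma ind_of_not_mem {E : Set Edge} {e : Edge} (h : e ∉ E) : ind E e = 0 := if_neg h
lemma ind_le_one {E : Set Edge} {e : Edge} : ind E e ≤ 1 := by
  unfold ind; split <;> omega
lemma ind_eq_one_iff {E : Set Edge} {e : Edge} : ind E e = 1 ↔ e ∈ E := by
  unfold ind; split <;> simp_all
lemma ind_pos_iff {E : Set Edge} {e : Edge} : 0 < ind E e ↔ e ∈ E := by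
  unfold ind; split <;> simp_all

lemma ncard_inter_insert (E : Set Edge) {x : Edge} {s : Set Edge} (hx : x ∉ s)
    (hs : s.Finite) : (E ∩ insert x s).ncard = ind E x + (E ∩ s).ncard := by
  by_cases hxE : x ∈ E
  · have heq : E ∩ insert x s = insert x (E ∩ s) := by
      ext y
      simp only [Set.mem_inter_iff, Set.mem_insert_iff]
      constructor
      · rintro ⟨hy, rfl | h⟩
        · exact Or.inl rfl
        · exact Or.inr ⟨hy, h⟩
      · rintro (rfl | ⟨hy, h⟩)
        · exact ⟨hxE, Or.inl rfl⟩
        · exact ⟨hy, Or.inr h⟩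
    rw [heq, Set.ncard_insert_of_notMem (fun h => hx h.2) (hs.subset Set.inter_subset_right),
      ind_of_mem hxE, add_comm]
  · have heq : E ∩ insert x s = E ∩ s := by
      ext y; simp only [Set.mem_inter_iff, Set.mem_insert_iff]
      constructor
      · rintro ⟨hy, rfl | hy2⟩
        · exact absurd hy hxE
        · exact ⟨hy, hy2⟩
      · rintro ⟨hy, hy2⟩; exact ⟨hy, Or.inr hy2⟩
    rw [heq, ind_of_not_mem hxE, zero_add]

lemma ncard_inter_singleton (E : Set Edge) (x : Edge) : (E ∩ {x}).ncard = ind E x := by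
  have : ({x} : Set Edge) = insert x ∅ := by simp
  rw [this, ncard_inter_insert E (Set.notMem_empty x) Set.finite_empty]
  simp

lemma ncard_inter_four (E : Set Edge) {e1 e2 e3 e4 : Edge} (h12 : e1 ≠ e2) (h13 : e1 ≠ e3)
    (h14 : e1 ≠ e4) (h23 : e2 ≠ e3) (h24 : e2 ≠ e4) (h34 : e3 ≠ e4) :
    (E ∩ {e1, e2, e3, e4}).ncard = ind E e1 + ind E e2 + ind E e3 + ind E e4 := by
  rw [ncard_inter_insert E (by simp [h12, h13, h14]) (by simp),
    ncard_inter_insert E (by simp [h23, h24]) (by simp),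
    ncard_inter_insert E (by simp [h34]) (by simp),
    ncard_inter_singleton]
  ring

lemma cellEdges_eq (a b : ℤ) :
    cellEdges a b = {horiz a b, vert a b, vert (a+1) b, horiz a (b+1)} := by
  rfl

lemma cellCount_formula (E : Set Edge) (a b : ℤ) :
    cellCount E a b =
      ind E (horiz a b) + ind E (vert a b) + ind E (vert (a+1) b) + ind E (horiz a (b+1)) := by
  rw [cellCount, cellEdges_eq]
  exact ncard_inter_four E (horiz_ne_vert) (horiz_ne_vert)
    (by rw [Ne, horiz_inj]; omega)
    (by rw [Ne, vert_inj]; omega) (Ne.symm horiz_ne_vert) (Ne.symm horiz_ne_vert)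

/-- The set of vertices covered by an edge set. -/
def VS (E : Set Edge) : Set V := {p | ∃ e ∈ E, p ∈ e}

lemma VS_finite {E : Set Edge} (hE : E.Finite) : (VS E).Finite := by
  have : VS E = ⋃ e ∈ E, {p : V | p ∈ e} := by
    ext p; simp [VS]
  rw [this]
  refine hE.biUnion (fun e _ => ?_)
  induction e using Sym2.ind with
  | _ x y =>
    have : {p : V | p ∈ s(x,y)} = {x, y} := by ext p; simp [Sym2.mem_iff]
    rw [this]; exact (Set.finite_singleton x).insert y |>.subset (by simp [Set.subset_def])

lemma degree_formula (C : Set Edge)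
    (hunit : ∀ e ∈ C, (∃ x y, e = horiz x y) ∨ (∃ x y, e = vert x y)) (p : V) :
    degree C p = ind C (horiz p.1 p.2) + ind C (horiz (p.1 - 1) p.2)
      + ind C (vert p.1 p.2) + ind C (vert p.1 (p.2 - 1)) := by
  have hset : {e ∈ C | p ∈ e} =
      C ∩ {horiz p.1 p.2, horiz (p.1 - 1) p.2, vert p.1 p.2, vert p.1 (p.2 - 1)} := by
    ext e
    simp only [Set.mem_setOf_eq, Set.mem_inter_iff, Set.mem_insert_iff, Set.mem_singleton_iff]
    constructor
    · rintro ⟨heC, hpe⟩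
      refine ⟨heC, ?_⟩
      rcases hunit e heC with ⟨x, y, rfl⟩ | ⟨x, y, rfl⟩
      · rcases mem_horiz.1 hpe with rfl | rfl
        · left; rfl
        · right; left; rw [horiz_inj]; exact ⟨by simp, by simp⟩
      · rcases mem_vert.1 hpe with rfl | rfl
        · right; right; left; rfl
        · right; right; right; rw [vert_inj]; exact ⟨by simp, by simp⟩
    · rintro ⟨heC, rfl | rfl | rfl | rfl⟩ <;> refine ⟨heC, ?_⟩
      · exact mem_horiz.2 (Or.inl rfl)
      · exact mem_horiz.2 (Or.inr (by simp [Prod.ext_iff]))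
      · exact mem_vert.2 (Or.inl rfl)
      · exact mem_vert.2 (Or.inr (by simp [Prod.ext_iff]))
  rw [degree, hset]
  exact ncard_inter_four C (by rw [Ne, horiz_inj]; omega) horiz_ne_vert horiz_ne_vert
    horiz_ne_vert horiz_ne_vert (by rw [Ne, vert_inj]; omega)

lemma gridEdge_finite (m n : ℤ) : {e : Edge | gridEdge m n e}.Finite := by
  have hB : ((Set.Icc (1:ℤ) m ×ˢ Set.Icc (1:ℤ) n) ×ˢ
      (Set.Icc (1:ℤ) m ×ˢ Set.Icc (1:ℤ) n)).Finite :=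
    (((Set.finite_Icc _ _).prod (Set.finite_Icc _ _))).prod
      ((Set.finite_Icc _ _).prod (Set.finite_Icc _ _))
  refine (hB.image (fun pq => s(pq.1, pq.2))).subset ?_
  rintro e ⟨p, q, rfl, hp, hq, _⟩
  exact ⟨(p, q), ⟨⟨⟨hp.1, hp.2.1⟩, hp.2.2.1, hp.2.2.2⟩, ⟨hq.1, hq.2.1⟩, hq.2.2.1, hq.2.2.2⟩, rfl⟩

lemma cycle_finite {m n : ℤ} {C : Set Edge} (h : IsCycle m n C) : C.Finite :=
  (gridEdge_finite m n).subset h.2.1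

lemma cycle_unit {m n : ℤ} {C : Set Edge} (h : IsCycle m n C) :
    ∀ e ∈ C, (∃ x y, e = horiz x y) ∨ (∃ x y, e = vert x y) :=
  fun e he => gridEdge_cases (h.2.1 e he)
lemma degree_insert {C : Set Edge} {e : Edge} (he : e ∉ C) (hC : C.Finite) (p : V) :
    degree (insert e C) p = (if p ∈ e then 1 else 0) + degree C p := by
  by_cases hp : p ∈ e
  · have heq : {f ∈ insert e C | p ∈ f} = insert e {f ∈ C | p ∈ f} := by
      ext f
      simp only [Set.mem_setOf_eq, Set.mem_insert_iff]
      constructor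
      · rintro ⟨rfl | hf, hpf⟩
        · exact Or.inl rfl
        · exact Or.inr ⟨hf, hpf⟩
      · rintro (rfl | ⟨hf, hpf⟩)
        · exact ⟨Or.inl rfl, hp⟩
        · exact ⟨Or.inr hf, hpf⟩
    rw [degree, heq, Set.ncard_insert_of_notMem (fun h => he h.1)
      (hC.subset (Set.sep_subset _ _)), if_pos hp, degree, add_comm]
  · have heq : {f ∈ insert e C | p ∈ f} = {f ∈ C | p ∈ f} := by
      ext f
      simp only [Set.mem_setOf_eq, Set.mem_insert_iff]
      constructor
      · rintro ⟨rfl | hf, hpf⟩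
        · exact absurd hpf hp
        · exact ⟨hf, hpf⟩
      · rintro ⟨hf, hpf⟩
        exact ⟨Or.inr hf, hpf⟩
    rw [degree, heq, if_neg hp, degree, zero_add]

lemma degree_remove {C : Set Edge} {e : Edge} (he : e ∈ C) (hC : C.Finite) (p : V) :
    degree C p = (if p ∈ e then 1 else 0) + degree (C \ {e}) p := by
  have h1 : C = insert e (C \ {e}) := by
    rw [Set.insert_diff_singleton, Set.insert_eq_of_mem he]
  nth_rewrite 1 [h1]
  exact degree_insert (by simp) (hC.subset Set.diff_subset) p

lemma mem_VS_of_degree_ne_zero {E : Set Edge} {p : V} (h : degree E p ≠ 0) : p ∈ VS E := by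
  obtain ⟨e, he⟩ := Set.nonempty_of_ncard_ne_zero h
  exact ⟨e, he.1, he.2⟩

lemma unit_not_diag {e : Edge} (h : (∃ x y, e = horiz x y) ∨ (∃ x y, e = vert x y)) :
    ¬ e.IsDiag := by
  rcases h with ⟨x, y, rfl⟩ | ⟨x, y, rfl⟩
  · rw [horiz, Sym2.mk_isDiag_iff]
    intro hh
    rw [Prod.ext_iff] at hh
    simp at hh
  · rw [vert, Sym2.mk_isDiag_iff]
    intro hh
    rw [Prod.ext_iff] at hh
    simp at hh

lemma even_ncard_oddVerts {E : Set Edge} (hE : E.Finite) :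
    ∀ (K : Set V), (∀ e ∈ E, ¬ e.IsDiag) → (∀ x y : V, s(x,y) ∈ E → (x ∈ K ↔ y ∈ K)) →
    Even {p ∈ K | Odd (degree E p)}.ncard := by
  induction E, hE using Set.Finite.induction_on with
  | empty =>
    intro K _ _
    have h0 : {p ∈ K | Odd (degree (∅ : Set Edge) p)} = ∅ := by
      ext p
      simp [degree]
    simp [h0]
  | insert henot hfin ih =>
    rename_i e E₀
    intro K hdiag hK
    induction e using Sym2.ind with
    | _ x y =>
    have hxy : x ≠ y := by
      have := hdiag s(x,y) (Set.mem_insert _ _)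
      rwa [Sym2.mk_isDiag_iff] at this
    have hO₀fin : {p ∈ K | Odd (degree E₀ p)}.Finite :=
      (VS_finite hfin).subset (fun p hp => mem_VS_of_degree_ne_zero (by
        intro h0
        have hodd := hp.2
        rw [h0] at hodd
        exact (Nat.not_odd_iff_even.2 Even.zero) hodd))
    have hdeg : ∀ p : V, degree (insert s(x,y) E₀) p
        = (if p ∈ s(x,y) then 1 else 0) + degree E₀ p :=
      degree_insert henot hfin
    have hIH := ih K (fun e he => hdiag e (Set.mem_insert_of_mem _ he))
      (fun a b hab => hK a b (Set.mem_insert_of_mem _ hab))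
    set O₀ := {p ∈ K | Odd (degree E₀ p)} with hO₀def
    have hflip : ∀ d : ℕ, Odd (1 + d) ↔ ¬ Odd d := by
      intro d
      rw [add_comm, Nat.odd_add_one, Nat.not_odd_iff_even]
    by_cases hxK : x ∈ K
    · have hyK : y ∈ K := (hK x y (Set.mem_insert _ _)).1 hxK
      have hO₁ : {p ∈ K | Odd (degree (insert s(x,y) E₀) p)}
          = (O₀ \ {x, y}) ∪ (({x, y} : Set V) \ O₀) := by
        ext p
        simp only [hO₀def, Set.mem_setOf_eq, Set.mem_union, Set.mem_diff, Set.mem_insert_iff,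
          Set.mem_singleton_iff, hdeg]
        by_cases hpe : p ∈ s(x,y)
        · have hp2 : p = x ∨ p = y := Sym2.mem_iff.1 hpe
          have hpK : p ∈ K := by rcases hp2 with rfl | rfl <;> assumption
          rw [if_pos hpe]
          constructor
          · rintro ⟨-, hodd⟩
            right
            exact ⟨hp2, fun hmem => ((hflip _).1 hodd) hmem.2⟩
          · rintro (⟨⟨-, -⟩, hnot⟩ | ⟨-, hnot⟩)
            · exact absurd hp2 hnot
            · exact ⟨hpK, (hflip _).2 (fun ho => hnot ⟨hpK, ho⟩)⟩
        · have hpxy : ¬(p = x ∨ p = y) := fun h => hpe (Sym2.mem_iff.2 h)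
          rw [if_neg hpe, zero_add]
          constructor
          · intro h
            exact Or.inl ⟨h, hpxy⟩
          · rintro (⟨h, -⟩ | ⟨h2, -⟩)
            · exact h
            · exact absurd h2 hpxy
      rw [hO₁]
      have hdisj : Disjoint (O₀ \ {x, y}) (({x, y} : Set V) \ O₀) := by
        rw [Set.disjoint_iff]
        rintro p ⟨⟨hp1, -⟩, -, hp2⟩
        exact hp2 hp1
      have hpairfin : ({x, y} : Set V).Finite := by simp
      rw [Set.ncard_union_eq hdisj (hO₀fin.diff) (hpairfin.diff)]
      have e1 : (O₀ ∩ {x, y}).ncard + (O₀ \ {x, y}).ncard = O₀.ncard :=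
        Set.ncard_inter_add_ncard_diff_eq_ncard O₀ {x, y} hO₀fin
      have e2 : (({x, y} : Set V) ∩ O₀).ncard + (({x, y} : Set V) \ O₀).ncard
          = ({x, y} : Set V).ncard :=
        Set.ncard_inter_add_ncard_diff_eq_ncard {x, y} O₀ hpairfin
      have e3 : ({x, y} : Set V).ncard = 2 := Set.ncard_pair hxy
      have e4 : (O₀ ∩ {x, y}).ncard = (({x, y} : Set V) ∩ O₀).ncard := by
        rw [Set.inter_comm]
      rw [Nat.even_iff] at hIH ⊢
      omega
    · have hyK : y ∉ K := fun hy => hxK ((hK x y (Set.mem_insert _ _)).2 hy)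
      have hO₁ : {p ∈ K | Odd (degree (insert s(x,y) E₀) p)} = O₀ := by
        ext p
        simp only [hO₀def, Set.mem_setOf_eq, hdeg]
        constructor
        · rintro ⟨hpK, hodd⟩
          have hpe : p ∉ s(x,y) := by
            intro hpe
            rcases Sym2.mem_iff.1 hpe with rfl | rfl
            · exact hxK hpK
            · exact hyK hpK
          rw [if_neg hpe, zero_add] at hodd
          exact ⟨hpK, hodd⟩
        · rintro ⟨hpK, hodd⟩
          have hpe : p ∉ s(x,y) := by
            intro hpe
            rcases Sym2.mem_iff.1 hpe with rfl | rfl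
            · exact hxK hpK
            · exact hyK hpK
          rw [if_neg hpe, zero_add]
          exact ⟨hpK, hodd⟩
      rw [hO₁]
      exact hIH
lemma cycleGraph_mono {C D : Set Edge} (h : C ⊆ D) : cycleGraph C ≤ cycleGraph D :=
  fun _ _ hpq => ⟨hpq.1, h hpq.2⟩

lemma reachable_avoid {C : Set Edge} {u v : V}
    (huv : (cycleGraph (C \ {s(u,v)})).Reachable u v) {p q : V}
    (h : (cycleGraph C).Reachable p q) : (cycleGraph (C \ {s(u,v)})).Reachable p q := by
  obtain ⟨w⟩ := h
  induction w with
  | nil => exact SimpleGraph.Reachable.refl _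
  | cons hadj w ih =>
    rename_i a b c
    by_cases hc : s(a, b) = s(u, v)
    · rcases Sym2.eq_iff.1 hc with ⟨rfl, rfl⟩ | ⟨rfl, rfl⟩
      · exact huv.trans ih
      · exact huv.symm.trans ih
    · have hadj' : (cycleGraph (C \ {s(u,v)})).Adj a b := ⟨hadj.1, hadj.2, hc⟩
      exact hadj'.reachable.trans ih

lemma degree_ne_zero_of_mem {C : Set Edge} {e : Edge} {p : V} (hC : C.Finite)
    (he : e ∈ C) (hp : p ∈ e) : degree C p ≠ 0 := by
  intro h0
  rw [degree, Set.ncard_eq_zero (hC.subset (Set.sep_subset _ _))] at h0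
  exact absurd h0 (Set.nonempty_iff_ne_empty.1 ⟨e, he, hp⟩)

lemma degree_eq_zero_of_not_mem_VS {E : Set Edge} {p : V} (h : p ∉ VS E) :
    degree E p = 0 := by
  rw [degree]
  convert Set.ncard_empty Edge using 2
  ext e
  simp only [Set.mem_setOf_eq, Set.mem_empty_iff_false, iff_false, not_and]
  intro he hpe
  exact h ⟨e, he, hpe⟩

lemma cycle_minus_edge_reachable {C : Set Edge} (hfin : C.Finite)
    (hd : ∀ e ∈ C, ¬ e.IsDiag) (hdeg : ∀ p, degree C p = 0 ∨ degree C p = 2)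
    {u v : V} (huv : s(u,v) ∈ C) (hne : u ≠ v) :
    (cycleGraph (C \ {s(u,v)})).Reachable u v := by
  by_contra hcon
  set E := C \ {s(u,v)} with hEdef
  set K := {p : V | (cycleGraph E).Reachable u p} with hKdef
  have hEfin : E.Finite := hfin.subset Set.diff_subset
  have hEd : ∀ e ∈ E, ¬ e.IsDiag := fun e he => hd e he.1
  have hK : ∀ x y : V, s(x,y) ∈ E → (x ∈ K ↔ y ∈ K) := by
    intro x y hxyE
    have hxy : x ≠ y := by
      intro h
      exact hEd _ hxyE (by rw [h, Sym2.mk_isDiag_iff])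
    constructor
    · intro hx
      exact hx.trans (SimpleGraph.Adj.reachable ⟨hxy, hxyE⟩)
    · intro hy
      exact hy.trans (SimpleGraph.Adj.reachable ⟨hxy.symm, by rwa [Sym2.eq_swap]⟩)
  have heven := even_ncard_oddVerts hEfin K hEd hK
  have hdegE : ∀ p : V, degree C p = (if p ∈ s(u,v) then 1 else 0) + degree E p :=
    degree_remove huv hfin
  have hOdd : ∀ p : V, Odd (degree E p) ↔ p ∈ s(u,v) := by
    intro p
    by_cases hp : p ∈ s(u,v)
    · have hne0 := degree_ne_zero_of_mem hfin huv hp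
      have h2 : degree C p = 2 := by
        rcases hdeg p with h0 | h0
        · exact absurd h0 hne0
        · exact h0
      have h3 := hdegE p
      rw [h2, if_pos hp] at h3
      simp only [hp, iff_true]
      have h4 : degree E p = 1 := by omega
      rw [h4]
      exact odd_one
    · have h3 := hdegE p
      rw [if_neg hp, zero_add] at h3
      simp only [hp, iff_false]
      rw [← h3]
      rcases hdeg p with h0 | h0 <;> rw [h0] <;> decide
  have hKset : {p ∈ K | Odd (degree E p)} = {u} := by
    ext p
    simp only [Set.mem_setOf_eq, Set.mem_singleton_iff, hOdd]
    constructor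
    · rintro ⟨hpK, hp⟩
      rcases Sym2.mem_iff.1 hp with rfl | rfl
      · rfl
      · exact absurd hpK hcon
    · rintro rfl
      exact ⟨SimpleGraph.Reachable.refl _, Sym2.mem_iff.2 (Or.inl rfl)⟩
  rw [hKset, Set.ncard_singleton] at heven
  exact (Nat.not_even_one) heven
def Shape (C : Set Edge) : Prop :=
  C.Nonempty ∧ (∀ p, degree C p = 0 ∨ degree C p = 2) ∧
  (∀ p q : V, (∃ e ∈ C, p ∈ e) → (∃ e ∈ C, q ∈ e) → (cycleGraph C).Reachable p q)

lemma isCycle_iff {m n : ℤ} {C : Set Edge} :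
    IsCycle m n C ↔ (∀ e ∈ C, gridEdge m n e) ∧ Shape C := by
  unfold IsCycle Shape
  tauto

lemma edge_exists_mem (e : Edge) : ∃ x, x ∈ e := by
  induction e using Sym2.ind with
  | _ x y => exact ⟨x, Sym2.mem_iff.2 (Or.inl rfl)⟩

lemma mem_VS {E : Set Edge} {e : Edge} {p : V} (he : e ∈ E) (hp : p ∈ e) : p ∈ VS E :=
  ⟨e, he, hp⟩

lemma degree_union {X Y : Set Edge} (h : Disjoint X Y) (hX : X.Finite) (hY : Y.Finite)
    (p : V) : degree (X ∪ Y) p = degree X p + degree Y p := by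
  have heq : {e ∈ X ∪ Y | p ∈ e} = {e ∈ X | p ∈ e} ∪ {e ∈ Y | p ∈ e} := by
    ext e
    simp only [Set.mem_setOf_eq, Set.mem_union]
    tauto
  rw [degree, heq, Set.ncard_union_eq
    (h.mono (Set.sep_subset _ _) (Set.sep_subset _ _))
    (hX.subset (Set.sep_subset _ _)) (hY.subset (Set.sep_subset _ _))]
  rfl

lemma degree_singleton (e : Edge) (p : V) :
    degree {e} p = if p ∈ e then 1 else 0 := by
  by_cases hp : p ∈ e
  · rw [if_pos hp, degree]
    convert Set.ncard_singleton e using 2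
    ext f
    simp only [Set.mem_setOf_eq, Set.mem_singleton_iff]
    constructor
    · rintro ⟨rfl, -⟩; rfl
    · rintro rfl; exact ⟨rfl, hp⟩
  · rw [if_neg hp, degree]
    convert Set.ncard_empty Edge using 2
    ext f
    simp only [Set.mem_setOf_eq, Set.mem_singleton_iff, Set.mem_empty_iff_false, iff_false,
      not_and]
    rintro rfl
    exact hp

lemma degree_pair {c₁ c₂ : Edge} (hne : c₁ ≠ c₂) (p : V) :
    degree {c₁, c₂} p = (if p ∈ c₁ then 1 else 0) + (if p ∈ c₂ then 1 else 0) := by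
  have : ({c₁, c₂} : Set Edge) = {c₁} ∪ {c₂} := by
    ext x; simp only [Set.mem_insert_iff, Set.mem_singleton_iff, Set.mem_union]
  rw [this, degree_union (by simp [hne]) (by simp) (by simp), degree_singleton,
    degree_singleton]

lemma VS_subset_of_union {X Y : Set Edge} : VS (X ∪ Y) ⊆ VS X ∪ VS Y := by
  rintro p ⟨e, he | he, hpe⟩
  · exact Or.inl ⟨e, he, hpe⟩
  · exact Or.inr ⟨e, he, hpe⟩

lemma VS_mono {X Y : Set Edge} (h : X ⊆ Y) : VS X ⊆ VS Y := by
  rintro p ⟨e, he, hpe⟩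
  exact ⟨e, h he, hpe⟩

lemma merge_shape {A B : Set Edge} (hAf : A.Finite) (hBf : B.Finite)
    (hAd : ∀ e ∈ A, ¬ e.IsDiag) (hBd : ∀ e ∈ B, ¬ e.IsDiag)
    (hA : Shape A) (hB : Shape B)
    (hdisj : ∀ p, p ∈ VS A → p ∉ VS B)
    {u v u' v' : V} (hru : s(u,v) ∈ A) (hrv : s(u',v') ∈ B)
    (huv : u ≠ v) (hu'v' : u' ≠ v') :
    Shape ((A \ {s(u,v)}) ∪ (B \ {s(u',v')}) ∪ {s(u,u'), s(v,v')}) ∧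
    VS ((A \ {s(u,v)}) ∪ (B \ {s(u',v')}) ∪ {s(u,u'), s(v,v')}) ⊆ VS A ∪ VS B := by
  set r : Edge := s(u,v) with hrdef
  set r' : Edge := s(u',v') with hr'def
  set c₁ : Edge := s(u,u') with hc₁def
  set c₂ : Edge := s(v,v') with hc₂def
  set M : Set Edge := (A \ {r}) ∪ (B \ {r'}) ∪ {c₁, c₂} with hMdef
  have huA : u ∈ VS A := mem_VS hru (Sym2.mem_iff.2 (Or.inl rfl))
  have hvA : v ∈ VS A := mem_VS hru (Sym2.mem_iff.2 (Or.inr rfl))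
  have hu'B : u' ∈ VS B := mem_VS hrv (Sym2.mem_iff.2 (Or.inl rfl))
  have hv'B : v' ∈ VS B := mem_VS hrv (Sym2.mem_iff.2 (Or.inr rfl))
  have huB : u ∉ VS B := hdisj u huA
  have hvB : v ∉ VS B := hdisj v hvA
  have hu'A : u' ∉ VS A := fun h => hdisj u' h hu'B
  have hv'A : v' ∉ VS A := fun h => hdisj v' h hv'B
  have huu' : u ≠ u' := fun h => huB (h ▸ hu'B)
  have hvv' : v ≠ v' := fun h => hvB (h ▸ hv'B)
  have huv' : u ≠ v' := fun h => huB (h ▸ hv'B)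
  have hvu' : v ≠ u' := fun h => hvB (h ▸ hu'B)
  have hc12 : c₁ ≠ c₂ := by
    rw [hc₁def, hc₂def, Ne, Sym2.eq_iff]
    rintro (⟨h1, -⟩ | ⟨h1, -⟩)
    · exact huv h1
    · exact huv' h1
  have hABdisj : Disjoint A B := by
    rw [Set.disjoint_left]
    intro e heA heB
    obtain ⟨x, hx⟩ := edge_exists_mem e
    exact hdisj x (mem_VS heA hx) (mem_VS heB hx)
  have hc₁A : c₁ ∉ A := fun h => hu'A (mem_VS h (Sym2.mem_iff.2 (Or.inr rfl)))
  have hc₁B : c₁ ∉ B := fun h => huB (mem_VS h (Sym2.mem_iff.2 (Or.inl rfl)))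
  have hc₂A : c₂ ∉ A := fun h => hv'A (mem_VS h (Sym2.mem_iff.2 (Or.inr rfl)))
  have hc₂B : c₂ ∉ B := fun h => hvB (mem_VS h (Sym2.mem_iff.2 (Or.inl rfl)))
  have hd1 : Disjoint (A \ {r}) (B \ {r'}) :=
    (hABdisj.mono Set.diff_subset Set.diff_subset)
  have hd2 : Disjoint ((A \ {r}) ∪ (B \ {r'})) {c₁, c₂} := by
    rw [Set.disjoint_right]
    rintro e he
    rcases he with rfl | rfl
    · rintro (⟨h, -⟩ | ⟨h, -⟩)
      · exact hc₁A h
      · exact hc₁B h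
    · rintro (⟨h, -⟩ | ⟨h, -⟩)
      · exact hc₂A h
      · exact hc₂B h
  have hVS : VS M ⊆ VS A ∪ VS B := by
    intro p hp
    rcases hp with ⟨e, he, hpe⟩
    rcases he with (he | he) | he
    · exact Or.inl (mem_VS he.1 hpe)
    · exact Or.inr (mem_VS he.1 hpe)
    · rcases he with rfl | rfl
      · rcases Sym2.mem_iff.1 hpe with rfl | rfl
        · exact Or.inl huA
        · exact Or.inr hu'B
      · rcases Sym2.mem_iff.1 hpe with rfl | rfl
        · exact Or.inl hvA
        · exact Or.inr hv'B
  refine ⟨⟨⟨c₁, Or.inr (by simp)⟩, ?_, ?_⟩, hVS⟩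
  · -- degrees
    intro p
    have hsplit : degree M p = degree (A \ {r}) p + degree (B \ {r'}) p
        + degree {c₁, c₂} p := by
      rw [hMdef, degree_union hd2 ((hAf.diff).union (hBf.diff)) (by simp),
        degree_union hd1 (hAf.diff) (hBf.diff)]
    have hdegA := degree_remove hru hAf p
    have hdegB := degree_remove hrv hBf p
    have hpairdeg := degree_pair hc12 p
    rw [hsplit, hpairdeg]
    by_cases hpA : p ∈ VS A
    · have hpB : p ∉ VS B := hdisj p hpA
      have hdB0 : degree B p = 0 := degree_eq_zero_of_not_mem_VS hpB
      have hpr' : p ∉ r' := fun h => hpB (mem_VS hrv h)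
      have hBr'0 : degree (B \ {r'}) p = 0 := by
        rw [if_neg hpr', zero_add] at hdegB
        omega
      by_cases hpu : p = u
      · subst hpu
        have hpc₁ : p ∈ c₁ := Sym2.mem_iff.2 (Or.inl rfl)
        have hpc₂ : p ∉ c₂ := by
          rw [hc₂def, Sym2.mem_iff]
          rintro (rfl | rfl)
          · exact huv rfl
          · exact huv' rfl
        have hpr : p ∈ r := Sym2.mem_iff.2 (Or.inl rfl)
        have hdA2 : degree A p = 2 := by
          rcases hA.2.1 p with h0 | h0
          · exact absurd h0 (degree_ne_zero_of_mem hAf hru hpr)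
          · exact h0
        rw [if_pos hpr, hdA2] at hdegA
        rw [if_pos hpc₁, if_neg hpc₂, hBr'0]
        omega
      · by_cases hpv : p = v
        · subst hpv
          have hpc₂ : p ∈ c₂ := Sym2.mem_iff.2 (Or.inl rfl)
          have hpc₁ : p ∉ c₁ := by
            rw [hc₁def, Sym2.mem_iff]
            rintro (rfl | rfl)
            · exact huv rfl
            · exact hvu' rfl
          have hpr : p ∈ r := Sym2.mem_iff.2 (Or.inr rfl)
          have hdA2 : degree A p = 2 := by
            rcases hA.2.1 p with h0 | h0
            · exact absurd h0 (degree_ne_zero_of_mem hAf hru hpr)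
            · exact h0
          rw [if_pos hpr, hdA2] at hdegA
          rw [if_pos hpc₂, if_neg hpc₁, hBr'0]
          omega
        · have hpr : p ∉ r := by
            rw [hrdef, Sym2.mem_iff]
            rintro (rfl | rfl)
            · exact hpu rfl
            · exact hpv rfl
          have hpc₁ : p ∉ c₁ := by
            rw [hc₁def, Sym2.mem_iff]
            rintro (rfl | rfl)
            · exact hpu rfl
            · exact hu'A hpA
          have hpc₂ : p ∉ c₂ := by
            rw [hc₂def, Sym2.mem_iff]
            rintro (rfl | rfl)
            · exact hpv rfl
            · exact hv'A hpA
          rw [if_neg hpr, zero_add] at hdegA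
          rw [if_neg hpc₁, if_neg hpc₂, hBr'0, ← hdegA]
          rcases hA.2.1 p with h0 | h0 <;> rw [h0] <;> simp
    · have hdA0 : degree A p = 0 := degree_eq_zero_of_not_mem_VS hpA
      have hpr : p ∉ r := fun h => hpA (mem_VS hru h)
      have hAr0 : degree (A \ {r}) p = 0 := by
        rw [if_neg hpr, zero_add] at hdegA
        omega
      by_cases hpB : p ∈ VS B
      · have hpc₁ : p ∈ c₁ ↔ p = u' := by
          rw [hc₁def, Sym2.mem_iff]
          constructor
          · rintro (rfl | rfl)
            · exact absurd huA hpA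
            · rfl
          · exact Or.inr
        have hpc₂ : p ∈ c₂ ↔ p = v' := by
          rw [hc₂def, Sym2.mem_iff]
          constructor
          · rintro (rfl | rfl)
            · exact absurd hvA hpA
            · rfl
          · exact Or.inr
        by_cases hpu' : p = u'
        · subst hpu'
          have hpr'' : p ∈ r' := Sym2.mem_iff.2 (Or.inl rfl)
          have hdB2 : degree B p = 2 := by
            rcases hB.2.1 p with h0 | h0
            · exact absurd h0 (degree_ne_zero_of_mem hBf hrv hpr'')
            · exact h0
          rw [if_pos hpr'', hdB2] at hdegB
          rw [if_pos (hpc₁.2 rfl), if_neg (fun h => hu'v' (hpc₂.1 h)), hAr0]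
          omega
        · by_cases hpv' : p = v'
          · subst hpv'
            have hpr'' : p ∈ r' := Sym2.mem_iff.2 (Or.inr rfl)
            have hdB2 : degree B p = 2 := by
              rcases hB.2.1 p with h0 | h0
              · exact absurd h0 (degree_ne_zero_of_mem hBf hrv hpr'')
              · exact h0
            rw [if_pos hpr'', hdB2] at hdegB
            rw [if_pos (hpc₂.2 rfl), if_neg (fun h => hpu' (hpc₁.1 h)), hAr0]
            omega
          · have hpr'' : p ∉ r' := by
              rw [hr'def, Sym2.mem_iff]
              rintro (rfl | rfl)
              · exact hpu' rfl
              · exact hpv' rfl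
            rw [if_neg hpr'', zero_add] at hdegB
            rw [if_neg (fun h => hpu' (hpc₁.1 h)), if_neg (fun h => hpv' (hpc₂.1 h)), hAr0,
              ← hdegB]
            rcases hB.2.1 p with h0 | h0 <;> rw [h0] <;> simp
      · have hdB0 : degree B p = 0 := degree_eq_zero_of_not_mem_VS hpB
        have hpr'' : p ∉ r' := fun h => hpB (mem_VS hrv h)
        have hBr'0 : degree (B \ {r'}) p = 0 := by
          rw [if_neg hpr'', zero_add] at hdegB
          omega
        have hpc₁ : p ∉ c₁ := by
          rw [hc₁def, Sym2.mem_iff]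
          rintro (rfl | rfl)
          · exact hpA huA
          · exact hpB hu'B
        have hpc₂ : p ∉ c₂ := by
          rw [hc₂def, Sym2.mem_iff]
          rintro (rfl | rfl)
          · exact hpA hvA
          · exact hpB hv'B
        rw [if_neg hpc₁, if_neg hpc₂, hAr0, hBr'0]
        left
        rfl
  · -- connectivity
    have hbrA : (cycleGraph (A \ {r})).Reachable u v :=
      cycle_minus_edge_reachable hAf hAd hA.2.1 hru huv
    have hbrB : (cycleGraph (B \ {r'})).Reachable u' v' :=
      cycle_minus_edge_reachable hBf hBd hB.2.1 hrv hu'v'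
    have hsub1 : A \ {r} ⊆ M := fun e he => Or.inl (Or.inl he)
    have hsub2 : B \ {r'} ⊆ M := fun e he => Or.inl (Or.inr he)
    have hreachA : ∀ p, p ∈ VS A → (cycleGraph M).Reachable p u := by
      rintro p ⟨e, he, hpe⟩
      have h1 : (cycleGraph A).Reachable p u := hA.2.2 p u ⟨e, he, hpe⟩
        ⟨r, hru, Sym2.mem_iff.2 (Or.inl rfl)⟩
      exact (reachable_avoid hbrA h1).mono (cycleGraph_mono hsub1)
    have hreachB : ∀ p, p ∈ VS B → (cycleGraph M).Reachable p u' := by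
      rintro p ⟨e, he, hpe⟩
      have h1 : (cycleGraph B).Reachable p u' := hB.2.2 p u' ⟨e, he, hpe⟩
        ⟨r', hrv, Sym2.mem_iff.2 (Or.inl rfl)⟩
      exact (reachable_avoid hbrB h1).mono (cycleGraph_mono hsub2)
    have hadj : (cycleGraph M).Adj u u' := ⟨huu', Or.inr (Set.mem_insert _ _)⟩
    have hto : ∀ p, p ∈ VS M → (cycleGraph M).Reachable p u := by
      intro p hp
      rcases hVS hp with hp1 | hp1
      · exact hreachA p hp1
      · exact (hreachB p hp1).trans hadj.symm.reachable
    intro p q hp hq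
    exact (hto p hp).trans (hto q hq).symm
def mapE (φ : V → V) (E : Set Edge) : Set Edge := (Sym2.map φ) '' E

lemma mapE_mono {φ : V → V} {E F : Set Edge} (h : E ⊆ F) : mapE φ E ⊆ mapE φ F :=
  Set.image_mono h

lemma mem_mapE_of_mem {φ : V → V} {E : Set Edge} {e : Edge} (h : e ∈ E) :
    Sym2.map φ e ∈ mapE φ E := ⟨e, h, rfl⟩

lemma mem_mapE_pair {φ : V → V} (hinj : Function.Injective φ) {E : Set Edge} {p q : V} :
    s(φ p, φ q) ∈ mapE φ E ↔ s(p, q) ∈ E := by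
  constructor
  · rintro ⟨e₀, he₀, heq⟩
    induction e₀ using Sym2.ind with
    | _ a b =>
      rw [Sym2.map_pair_eq, Sym2.eq_iff] at heq
      rcases heq with ⟨h1, h2⟩ | ⟨h1, h2⟩
      · rwa [show s(p,q) = s(a,b) by rw [Sym2.eq_iff]; exact Or.inl ⟨(hinj h1).symm, (hinj h2).symm⟩]
      · rwa [show s(p,q) = s(a,b) by rw [Sym2.eq_iff]; exact Or.inr ⟨(hinj h2).symm, (hinj h1).symm⟩]
  · intro h
    exact ⟨s(p,q), h, by rw [Sym2.map_pair_eq]⟩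

lemma mapE_union (φ : V → V) (E F : Set Edge) :
    mapE φ (E ∪ F) = mapE φ E ∪ mapE φ F := Set.image_union _ _ _

lemma mapE_inter {φ : V → V} (hinj : Function.Injective φ) (E F : Set Edge) :
    mapE φ (E ∩ F) = mapE φ E ∩ mapE φ F := Set.image_inter (Sym2.map.injective hinj)

lemma mapE_diff {φ : V → V} (hinj : Function.Injective φ) (E F : Set Edge) :
    mapE φ (E \ F) = mapE φ E \ mapE φ F := Set.image_diff (Sym2.map.injective hinj) _ _

lemma ncard_mapE {φ : V → V} (hinj : Function.Injective φ) (E : Set Edge) :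
    (mapE φ E).ncard = E.ncard := Set.ncard_image_of_injective _ (Sym2.map.injective hinj)

lemma mapE_sdiff {φ : V → V} (hinj : Function.Injective φ) (E F : Set Edge) :
    mapE φ (sdiff E F) = sdiff (mapE φ E) (mapE φ F) := by
  rw [sdiff, sdiff, mapE_union, mapE_diff hinj, mapE_diff hinj]

lemma VS_mapE (φ : V → V) (E : Set Edge) : VS (mapE φ E) = φ '' VS E := by
  ext p
  constructor
  · rintro ⟨e, ⟨e₀, he₀, rfl⟩, hpe⟩
    obtain ⟨a, ha, rfl⟩ := Sym2.mem_map.1 hpe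
    exact ⟨a, ⟨e₀, he₀, ha⟩, rfl⟩
  · rintro ⟨a, ⟨e₀, he₀, ha⟩, rfl⟩
    exact ⟨Sym2.map φ e₀, mem_mapE_of_mem he₀, Sym2.mem_map.2 ⟨a, ha, rfl⟩⟩

lemma degree_mapE {φ : V → V} (hinj : Function.Injective φ) (E : Set Edge) (p : V) :
    degree (mapE φ E) (φ p) = degree E p := by
  have heq : {e ∈ mapE φ E | φ p ∈ e} = (Sym2.map φ) '' {e ∈ E | p ∈ e} := by
    ext e
    constructor
    · rintro ⟨⟨e₀, he₀, rfl⟩, hpe⟩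
      obtain ⟨a, ha, haeq⟩ := Sym2.mem_map.1 hpe
      rw [hinj haeq] at ha
      exact ⟨e₀, ⟨he₀, ha⟩, rfl⟩
    · rintro ⟨e₀, ⟨he₀, hpe₀⟩, rfl⟩
      exact ⟨mem_mapE_of_mem he₀, Sym2.mem_map.2 ⟨p, hpe₀, rfl⟩⟩
  rw [degree, heq, Set.ncard_image_of_injective _ (Sym2.map.injective hinj), degree]

lemma reach_mapE {φ : V → V} (hinj : Function.Injective φ) {E : Set Edge} {p q : V}
    (h : (cycleGraph E).Reachable p q) :
    (cycleGraph (mapE φ E)).Reachable (φ p) (φ q) := by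
  obtain ⟨w⟩ := h
  induction w with
  | nil => exact SimpleGraph.Reachable.refl _
  | cons hadj w ih =>
    rename_i a b c
    have hadj' : (cycleGraph (mapE φ E)).Adj (φ a) (φ b) := by
      refine ⟨fun h => hadj.1 (hinj h), ?_⟩
      have : Sym2.map φ s(a, b) ∈ mapE φ E := mem_mapE_of_mem hadj.2
      rwa [Sym2.map_pair_eq] at this
    exact hadj'.reachable.trans ih

lemma shape_mapE {φ ψ : V → V} (hinv : ∀ p, ψ (φ p) = p) (hinv2 : ∀ p, φ (ψ p) = p)
    {C : Set Edge} (h : Shape C) : Shape (mapE φ C) := by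
  have hinj : Function.Injective φ := fun a b hab => by
    rw [← hinv a, hab, hinv b]
  obtain ⟨hne, hdeg, hreach⟩ := h
  refine ⟨hne.image _, ?_, ?_⟩
  · intro q
    have : q = φ (ψ q) := (hinv2 q).symm
    rw [this, degree_mapE hinj]
    exact hdeg _
  · rintro p q ⟨e, ⟨e₀, he₀, rfl⟩, hpe⟩ ⟨f, ⟨f₀, hf₀, rfl⟩, hqf⟩
    obtain ⟨a, ha, rfl⟩ := Sym2.mem_map.1 hpe
    obtain ⟨b, hb, rfl⟩ := Sym2.mem_map.1 hqf
    exact reach_mapE hinj (hreach a b ⟨e₀, he₀, ha⟩ ⟨f₀, hf₀, hb⟩)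

/-! concrete maps -/

def trX (c : ℤ) : V → V := fun p => (p.1 + c, p.2)
def mirX (c : ℤ) : V → V := fun p => (c - p.1, p.2)
def tpose : V → V := fun p => (p.2, p.1)

lemma trX_inv (c : ℤ) : ∀ p, trX (-c) (trX c p) = p := by
  intro p; simp [trX]
lemma mirX_inv (c : ℤ) : ∀ p, mirX c (mirX c p) = p := by
  intro p; simp [mirX]
lemma tpose_inv : ∀ p, tpose (tpose p) = p := by
  intro p; simp [tpose]

lemma trX_injective (c : ℤ) : Function.Injective (trX c) := fun a b h => by
  rw [← trX_inv c a, h, trX_inv c b]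
lemma mirX_injective (c : ℤ) : Function.Injective (mirX c) := fun a b h => by
  rw [← mirX_inv c a, h, mirX_inv c b]
lemma tpose_injective : Function.Injective tpose := fun a b h => by
  rw [← tpose_inv a, h, tpose_inv b]

lemma trX_horiz (c x y : ℤ) : Sym2.map (trX c) (horiz x y) = horiz (x + c) y := by
  rw [horiz, Sym2.map_pair_eq, horiz, trX, trX]
  congr 2
  simp [Prod.ext_iff]
  ring
lemma trX_vert (c x y : ℤ) : Sym2.map (trX c) (vert x y) = vert (x + c) y := by
  rw [vert, Sym2.map_pair_eq, vert, trX, trX]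
lemma mirX_horiz (c x y : ℤ) : Sym2.map (mirX c) (horiz x y) = horiz (c - x - 1) y := by
  rw [horiz, Sym2.map_pair_eq, horiz, mirX, mirX]
  rw [Sym2.eq_iff]
  right
  constructor <;> simp [Prod.ext_iff] <;> ring
lemma mirX_vert (c x y : ℤ) : Sym2.map (mirX c) (vert x y) = vert (c - x) y := by
  rw [vert, Sym2.map_pair_eq, vert, mirX, mirX]
lemma tpose_horiz (x y : ℤ) : Sym2.map tpose (horiz x y) = vert y x := by
  rw [horiz, Sym2.map_pair_eq, vert, tpose, tpose]
lemma tpose_vert (x y : ℤ) : Sym2.map tpose (vert x y) = horiz y x := by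
  rw [vert, Sym2.map_pair_eq, horiz, tpose, tpose]

lemma gridEdge_trX {m n M c : ℤ} {e : Edge} (h : gridEdge m n e) (hc : 0 ≤ c)
    (hM : m + c ≤ M) : gridEdge M n (Sym2.map (trX c) e) := by
  rcases gridEdge_cases h with ⟨x, y, rfl⟩ | ⟨x, y, rfl⟩
  · rw [gridEdge_horiz_iff] at h
    rw [trX_horiz, gridEdge_horiz_iff]
    omega
  · rw [gridEdge_vert_iff] at h
    rw [trX_vert, gridEdge_vert_iff]
    omega

lemma gridEdge_mirX {m n M c : ℤ} {e : Edge} (h : gridEdge m n e) (hc : m + 1 ≤ c)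
    (hM : c - 1 ≤ M) : gridEdge M n (Sym2.map (mirX c) e) := by
  rcases gridEdge_cases h with ⟨x, y, rfl⟩ | ⟨x, y, rfl⟩
  · rw [gridEdge_horiz_iff] at h
    rw [mirX_horiz, gridEdge_horiz_iff]
    omega
  · rw [gridEdge_vert_iff] at h
    rw [mirX_vert, gridEdge_vert_iff]
    omega

lemma gridEdge_tpose {m n : ℤ} {e : Edge} (h : gridEdge m n e) :
    gridEdge n m (Sym2.map tpose e) := by
  rcases gridEdge_cases h with ⟨x, y, rfl⟩ | ⟨x, y, rfl⟩
  · rw [gridEdge_horiz_iff] at h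
    rw [tpose_horiz, gridEdge_vert_iff]
    omega
  · rw [gridEdge_vert_iff] at h
    rw [tpose_vert, gridEdge_horiz_iff]
    omega

lemma mapE_cellEdges_trX (c α β : ℤ) :
    (Sym2.map (trX c)) '' cellEdges α β = cellEdges (α + c) β := by
  rw [cellEdges_eq, cellEdges_eq]
  rw [Set.image_insert_eq, Set.image_insert_eq, Set.image_insert_eq, Set.image_singleton,
    trX_horiz, trX_vert, trX_vert, trX_horiz, show α + 1 + c = α + c + 1 by ring]

lemma mapE_cellEdges_mirX (c α β : ℤ) :
    (Sym2.map (mirX c)) '' cellEdges α β = cellEdges (c - α - 1) β := by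
  rw [cellEdges_eq, cellEdges_eq]
  rw [Set.image_insert_eq, Set.image_insert_eq, Set.image_insert_eq, Set.image_singleton,
    mirX_horiz, mirX_vert, mirX_vert, mirX_horiz]
  ext e
  simp only [Set.mem_insert_iff, Set.mem_singleton_iff]
  constructor
  · rintro (rfl | rfl | rfl | rfl)
    · left; rw [horiz_inj]; omega
    · right; right; left; rw [vert_inj]; omega
    · right; left; rw [vert_inj]; omega
    · right; right; right; rw [horiz_inj]; omega
  · rintro (rfl | rfl | rfl | rfl)
    · left; rw [horiz_inj]; omega
    · right; right; left; rw [vert_inj]; omega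
    · right; left; rw [vert_inj]; omega
    · right; right; right; rw [horiz_inj]; omega

lemma mapE_cellEdges_tpose (α β : ℤ) :
    (Sym2.map tpose) '' cellEdges α β = cellEdges β α := by
  rw [cellEdges_eq, cellEdges_eq]
  rw [Set.image_insert_eq, Set.image_insert_eq, Set.image_insert_eq, Set.image_singleton,
    tpose_horiz, tpose_vert, tpose_vert, tpose_horiz]
  ext e
  simp only [Set.mem_insert_iff, Set.mem_singleton_iff]
  constructor
  · rintro (rfl | rfl | rfl | rfl)
    · right; left; rfl
    · left; rfl
    · right; right; right; rfl
    · right; right; left; rfl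
  · rintro (rfl | rfl | rfl | rfl)
    · right; left; rfl
    · left; rfl
    · right; right; right; rfl
    · right; right; left; rfl

lemma cellCount_mapE {φ : V → V} (hinj : Function.Injective φ) {α β α' β' : ℤ}
    (hcell : (Sym2.map φ) '' cellEdges α β = cellEdges α' β') (E : Set Edge) :
    cellCount (mapE φ E) α' β' = cellCount E α β := by
  rw [cellCount, cellCount, ← hcell, mapE, ← Set.image_inter (Sym2.map.injective hinj),
    Set.ncard_image_of_injective _ (Sym2.map.injective hinj)]
lemma VS_grid {m n : ℤ} {C : Set Edge} (hgrid : ∀ e ∈ C, gridEdge m n e) {p : V}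
    (hp : p ∈ VS C) : gridVertex m n p := by
  obtain ⟨e, he, hpe⟩ := hp
  obtain ⟨a, b, heq, ha, hb, -⟩ := hgrid e he
  rw [heq] at hpe
  rcases Sym2.mem_iff.1 hpe with rfl | rfl
  · exact ha
  · exact hb

lemma not_mem_of_out_left {m n : ℤ} {C : Set Edge} (hgrid : ∀ e ∈ C, gridEdge m n e)
    (y : ℤ) : horiz 0 y ∉ C := by
  intro h
  have := hgrid _ h
  rw [gridEdge_horiz_iff] at this
  omega

lemma sdiff_nonempty_of_ne {A B : Set Edge} (h : A ≠ B) : (sdiff A B).Nonempty := by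
  rw [Set.nonempty_iff_ne_empty]
  intro hemp
  apply h
  ext e
  constructor <;> intro he <;> by_contra hne
  · exact absurd (Set.eq_empty_iff_forall_notMem.1 hemp e) (fun hc => hc (Or.inl ⟨he, hne⟩))
  · exact absurd (Set.eq_empty_iff_forall_notMem.1 hemp e) (fun hc => hc (Or.inr ⟨he, hne⟩))

lemma mem_sdiff_iff {A B : Set Edge} {e : Edge} :
    e ∈ sdiff A B ↔ (e ∈ A ∧ e ∉ B) ∨ (e ∈ B ∧ e ∉ A) := Iff.rfl

lemma sdiff_subset_union {A B : Set Edge} : sdiff A B ⊆ A ∪ B := by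
  rintro e (⟨h, -⟩ | ⟨h, -⟩)
  · exact Or.inl h
  · exact Or.inr h

lemma degree_sdiff_even {A B : Set Edge} (hAf : A.Finite) (hBf : B.Finite)
    (hA : ∀ p, Even (degree A p)) (hB : ∀ p, Even (degree B p)) (p : V) :
    Even (degree (sdiff A B) p) := by
  set NA := {e ∈ A | p ∈ e} with hNA
  set NB := {e ∈ B | p ∈ e} with hNB
  have hNAf : NA.Finite := hAf.subset (Set.sep_subset _ _)
  have hNBf : NB.Finite := hBf.subset (Set.sep_subset _ _)
  have heq : {e ∈ sdiff A B | p ∈ e} = (NA \ NB) ∪ (NB \ NA) := by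
    ext e
    simp only [hNA, hNB, Set.mem_setOf_eq, Set.mem_union, Set.mem_diff, mem_sdiff_iff]
    constructor
    · rintro ⟨⟨he, hne⟩ | ⟨he, hne⟩, hpe⟩
      · exact Or.inl ⟨⟨he, hpe⟩, fun hc => hne hc.1⟩
      · exact Or.inr ⟨⟨he, hpe⟩, fun hc => hne hc.1⟩
    · rintro (⟨⟨he, hpe⟩, hne⟩ | ⟨⟨he, hpe⟩, hne⟩)
      · exact ⟨Or.inl ⟨he, fun hc => hne ⟨hc, hpe⟩⟩, hpe⟩
      · exact ⟨Or.inr ⟨he, fun hc => hne ⟨hc, hpe⟩⟩, hpe⟩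
  have hdisj : Disjoint (NA \ NB) (NB \ NA) := by
    rw [Set.disjoint_left]
    rintro e ⟨h1, h2⟩ ⟨h3, -⟩
    exact h2 h3
  have e1 : (NA ∩ NB).ncard + (NA \ NB).ncard = NA.ncard :=
    Set.ncard_inter_add_ncard_diff_eq_ncard NA NB hNAf
  have e2 : (NB ∩ NA).ncard + (NB \ NA).ncard = NB.ncard :=
    Set.ncard_inter_add_ncard_diff_eq_ncard NB NA hNBf
  have e3 : (NA ∩ NB).ncard = (NB ∩ NA).ncard := by rw [Set.inter_comm]
  have hA' := hA p
  have hB' := hB p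
  rw [degree] at hA' hB'
  rw [← hNA] at hA'
  rw [← hNB] at hB'
  rw [degree, heq, Set.ncard_union_eq hdisj (hNAf.diff) (hNBf.diff)]
  rw [Nat.even_iff] at hA' hB' ⊢
  omega

lemma ind_parity_sdiff (A B : Set Edge) (e : Edge) :
    (ind (sdiff A B) e + (ind A e + ind B e)) % 2 = 0 := by
  by_cases hA : e ∈ A <;> by_cases hB : e ∈ B
  · have h1 : e ∉ sdiff A B := by
      rw [mem_sdiff_iff]
      rintro (⟨-, h⟩ | ⟨-, h⟩) <;> [exact h hB; exact h hA]
    rw [ind_of_not_mem h1, ind_of_mem hA, ind_of_mem hB]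
  · have h1 : e ∈ sdiff A B := Or.inl ⟨hA, hB⟩
    rw [ind_of_mem h1, ind_of_mem hA, ind_of_not_mem hB]
  · have h1 : e ∈ sdiff A B := Or.inr ⟨hB, hA⟩
    rw [ind_of_mem h1, ind_of_not_mem hA, ind_of_mem hB]
  · have h1 : e ∉ sdiff A B := by
      rw [mem_sdiff_iff]
      rintro (⟨h, -⟩ | ⟨h, -⟩) <;> [exact hA h; exact hB h]
    rw [ind_of_not_mem h1, ind_of_not_mem hA, ind_of_not_mem hB]

lemma cellCount_sdiff_even {A B : Set Edge} {α β : ℤ}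
    (h : cellCount A α β = cellCount B α β) : Even (cellCount (sdiff A B) α β) := by
  have hS := cellCount_formula (sdiff A B) α β
  have hA := cellCount_formula A α β
  have hB := cellCount_formula B α β
  have p1 := ind_parity_sdiff A B (horiz α β)
  have p2 := ind_parity_sdiff A B (vert α β)
  have p3 := ind_parity_sdiff A B (vert (α+1) β)
  have p4 := ind_parity_sdiff A B (horiz α (β+1))
  rw [Nat.even_iff]
  omega

lemma cycle_two_le_m {m n : ℤ} {C : Set Edge} (h : IsCycle m n C) : 2 ≤ m := by
  obtain ⟨⟨e₀, he₀⟩, hgrid, hdeg, -⟩ := h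
  obtain ⟨p₀, hp₀⟩ := edge_exists_mem e₀
  have hys : ∃ z, ∃ p ∈ VS C, p.2 = z := ⟨p₀.2, p₀, ⟨e₀, he₀, hp₀⟩, rfl⟩
  have hbdd : ∃ b : ℤ, ∀ z, (∃ p ∈ VS C, p.2 = z) → z ≤ b := by
    refine ⟨n, ?_⟩
    rintro z ⟨p, hp, rfl⟩
    exact (VS_grid hgrid hp).2.2.2
  obtain ⟨ym, ⟨p, hp, hpy⟩, hmax⟩ := Int.exists_greatest_of_bdd hbdd hys
  have hdp : degree C p = 2 := by
    rcases hdeg p with h0 | h0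
    · obtain ⟨e, he, hpe⟩ := hp
      exact absurd h0 (degree_ne_zero_of_mem ((gridEdge_finite m n).subset hgrid) he hpe)
    · exact h0
  have hform := degree_formula C (fun e he => gridEdge_cases (hgrid e he)) p
  have hvup : ind C (vert p.1 p.2) = 0 := by
    apply ind_of_not_mem
    intro hc
    have : (p.1, p.2 + 1) ∈ VS C := mem_VS hc (mem_vert.2 (Or.inr rfl))
    have := hmax (p.2 + 1) ⟨_, this, rfl⟩
    omega
  have hh1 : ind C (horiz p.1 p.2) = 1 ∨ ind C (horiz (p.1 - 1) p.2) = 1 := by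
    have i1 := @ind_le_one C (horiz p.1 p.2)
    have i2 := @ind_le_one C (horiz (p.1 - 1) p.2)
    have i3 := @ind_le_one C (vert p.1 (p.2 - 1))
    omega
  rcases hh1 with h1 | h1
  · have := hgrid _ (ind_eq_one_iff.1 h1)
    rw [gridEdge_horiz_iff] at this
    omega
  · have := hgrid _ (ind_eq_one_iff.1 h1)
    rw [gridEdge_horiz_iff] at this
    omega
lemma even_degree_of_cycle {m n : ℤ} {C : Set Edge} (h : IsCycle m n C) (p : V) :
    Even (degree C p) := by
  rcases h.2.2.1 p with h0 | h0 <;> rw [h0]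
  · exact Even.zero
  · exact ⟨1, rfl⟩

lemma exists_col1_vert {m n : ℤ} {C₁ C₂ : Set Edge} (h₁ : IsCycle m n C₁)
    (h₂ : IsCycle m n C₂) (hne : C₁ ≠ C₂) (hs : SameSignature m n C₁ C₂) :
    ∃ y, vert 1 y ∈ sdiff C₁ C₂ := by
  set S := sdiff C₁ C₂ with hSdef
  have hSgrid : ∀ e ∈ S, gridEdge m n e := by
    intro e he
    rcases sdiff_subset_union he with h | h
    · exact h₁.2.1 e h
    · exact h₂.2.1 e h
  have hSfin : S.Finite := (gridEdge_finite m n).subset hSgrid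
  have hSunit : ∀ e ∈ S, (∃ x y, e = horiz x y) ∨ (∃ x y, e = vert x y) :=
    fun e he => gridEdge_cases (hSgrid e he)
  have hSne : S.Nonempty := sdiff_nonempty_of_ne hne
  have hSeven : ∀ p, Even (degree S p) :=
    degree_sdiff_even (cycle_finite h₁) (cycle_finite h₂)
      (even_degree_of_cycle h₁) (even_degree_of_cycle h₂)
  obtain ⟨e₀, he₀⟩ := hSne
  obtain ⟨p₀, hp₀⟩ := edge_exists_mem e₀
  have hinh : ∃ x : ℤ, ∃ p ∈ VS S, p.1 = x := ⟨p₀.1, p₀, ⟨e₀, he₀, hp₀⟩, rfl⟩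
  have hbdd : ∃ b : ℤ, ∀ x : ℤ, (∃ p ∈ VS S, p.1 = x) → b ≤ x := by
    refine ⟨1, ?_⟩
    rintro x ⟨p, hp, rfl⟩
    exact (VS_grid hSgrid hp).1
  obtain ⟨x₀, ⟨p, hp, hpx⟩, hmin⟩ := Int.exists_least_of_bdd hbdd hinh
  obtain ⟨ep, hep, hpep⟩ := hp
  have hdeg0 : degree S p ≠ 0 := degree_ne_zero_of_mem hSfin hep hpep
  have hform := degree_formula S hSunit p
  have hleft : ind S (horiz (p.1 - 1) p.2) = 0 := by
    apply ind_of_not_mem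
    intro hc
    have hv : (p.1 - 1, p.2) ∈ VS S := mem_VS hc (mem_horiz.2 (Or.inl rfl))
    have := hmin (p.1 - 1) ⟨_, hv, rfl⟩
    omega
  have hvert : vert p.1 p.2 ∈ S ∨ vert p.1 (p.2 - 1) ∈ S := by
    have i1 := @ind_le_one S (horiz p.1 p.2)
    have i3 := @ind_le_one S (vert p.1 p.2)
    have i4 := @ind_le_one S (vert p.1 (p.2 - 1))
    have heven := hSeven p
    rw [Nat.even_iff] at heven
    by_contra hcon
    push_neg at hcon
    rw [ind_of_not_mem hcon.1, ind_of_not_mem hcon.2, hleft] at hform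
    omega
  obtain ⟨y', hv⟩ : ∃ y', vert p.1 y' ∈ S := by
    rcases hvert with h | h
    · exact ⟨p.2, h⟩
    · exact ⟨p.2 - 1, h⟩
  have hbounds := hSgrid _ hv
  rw [gridEdge_vert_iff] at hbounds
  have hx1 : p.1 = 1 := by
    by_contra hx
    have hx2 : 2 ≤ p.1 := by omega
    have hcell : isCell m n (p.1 - 1) y' := ⟨by omega, by omega, by omega, by omega⟩
    have heven : Even (cellCount S (p.1 - 1) y') :=
      cellCount_sdiff_even (hs _ _ hcell)
    have hform2 := cellCount_formula S (p.1 - 1) y'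
    have hz1 : ind S (horiz (p.1 - 1) y') = 0 := by
      apply ind_of_not_mem
      intro hc
      have := hmin (p.1 - 1) ⟨_, mem_VS hc (mem_horiz.2 (Or.inl rfl)), rfl⟩
      omega
    have hz2 : ind S (vert (p.1 - 1) y') = 0 := by
      apply ind_of_not_mem
      intro hc
      have := hmin (p.1 - 1) ⟨_, mem_VS hc (mem_vert.2 (Or.inl rfl)), rfl⟩
      omega
    have hz3 : ind S (horiz (p.1 - 1) (y' + 1)) = 0 := by
      apply ind_of_not_mem
      intro hc
      have := hmin (p.1 - 1) ⟨_, mem_VS hc (mem_horiz.2 (Or.inl rfl)), rfl⟩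
      omega
    have hz4 : ind S (vert (p.1 - 1 + 1) y') = 1 := by
      rw [show p.1 - 1 + 1 = p.1 by ring]
      exact ind_of_mem hv
    rw [Nat.even_iff] at heven
    omega
  exact ⟨y', by rwa [hx1] at hv⟩

lemma shared_col1_aux {m n Y' : ℤ} {C D : Set Edge} (hC : IsCycle m n C) (hD : IsCycle m n D)
    (hs : ∀ a b : ℤ, isCell m n a b → cellCount C a b = cellCount D a b)
    (hmax : ∀ y, vert 1 y ∈ C ∪ D → y ≤ Y')
    (hvD : vert 1 Y' ∈ D) (hvC : vert 1 Y' ∉ C) :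
    ∃ h, vert 1 h ∈ C ∧ vert 1 h ∈ D := by
  have hCfin := cycle_finite hC
  have hDfin := cycle_finite hD
  have hCunit := cycle_unit hC
  have hDunit := cycle_unit hD
  have hm2 : 2 ≤ m := cycle_two_le_m hC
  have hb := hD.2.1 _ hvD
  rw [gridEdge_vert_iff] at hb
  -- degree of D at the top vertex p = (1, Y'+1)
  have hpD : degree D (1, Y' + 1) = 2 := by
    rcases hD.2.2.1 (1, Y' + 1) with h0 | h0
    · exact absurd h0 (degree_ne_zero_of_mem hDfin hvD (mem_vert.2 (Or.inr rfl)))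
    · exact h0
  have hformD := degree_formula D hDunit (1, Y' + 1)
  simp only at hformD
  have hD0 : ind D (horiz (1 - 1) (Y' + 1)) = 0 := by
    rw [show (1:ℤ) - 1 = 0 by ring]
    exact ind_of_not_mem (not_mem_of_out_left hD.2.1 _)
  have hDup : ind D (vert 1 (Y' + 1)) = 0 := by
    apply ind_of_not_mem
    intro hc
    have := hmax (Y' + 1) (Or.inr hc)
    omega
  have hDdown : ind D (vert 1 (Y' + 1 - 1)) = 1 := by
    rw [show Y' + 1 - 1 = Y' by ring]
    exact ind_of_mem hvD
  have hDright : horiz 1 (Y' + 1) ∈ D := by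
    rw [← ind_eq_one_iff]
    omega
  -- degree of C at the top vertex is 0
  have hformC := degree_formula C hCunit (1, Y' + 1)
  simp only at hformC
  have hC0 : ind C (horiz (1 - 1) (Y' + 1)) = 0 := by
    rw [show (1:ℤ) - 1 = 0 by ring]
    exact ind_of_not_mem (not_mem_of_out_left hC.2.1 _)
  have hCup : ind C (vert 1 (Y' + 1)) = 0 := by
    apply ind_of_not_mem
    intro hc
    have := hmax (Y' + 1) (Or.inl hc)
    omega
  have hCdown : ind C (vert 1 (Y' + 1 - 1)) = 0 := by
    rw [show Y' + 1 - 1 = Y' by ring]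
    exact ind_of_not_mem hvC
  have hCright : ind C (horiz 1 (Y' + 1)) = 0 := by
    have hdegC : degree C (1, Y' + 1) ≠ 2 → degree C (1, Y' + 1) = 0 := by
      rcases hC.2.2.1 (1, Y' + 1) with h0 | h0 <;> intro h <;> [exact h0; exact absurd h0 h]
    have i1 := @ind_le_one C (horiz 1 (Y' + 1))
    by_contra hcon
    have : degree C (1, Y' + 1) = 2 := by
      rcases hC.2.2.1 (1, Y' + 1) with h0 | h0
      · omega
      · exact h0
    omega
  -- the cell (1, Y')
  have hcell : isCell m n 1 Y' := ⟨le_refl 1, hm2, by omega, by omega⟩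
  have hcc := hs 1 Y' hcell
  have hccC := cellCount_formula C 1 Y'
  have hccD := cellCount_formula D 1 Y'
  have hvD1 : ind D (vert 1 Y') = 1 := ind_of_mem hvD
  have hvC1 : ind C (vert 1 Y') = 0 := ind_of_not_mem hvC
  have hhD1 : ind D (horiz 1 (Y' + 1)) = 1 := ind_of_mem hDright
  have i1 := @ind_le_one C (horiz 1 Y')
  have i2 := @ind_le_one C (vert 2 Y')
  have i3 := @ind_le_one D (horiz 1 Y')
  have i4 := @ind_le_one D (vert 2 Y')
  have i5 := @ind_le_one C (horiz 1 (Y' + 1))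
  have hCbot : ind C (horiz 1 Y') = 1 := by
    rw [show (2:ℤ) = 1 + 1 by ring] at i2 i4
    omega
  have hDbot : ind D (horiz 1 Y') = 0 := by
    rw [show (2:ℤ) = 1 + 1 by ring] at i2 i4
    omega
  -- degree of C at (1, Y')
  have hCmem : horiz 1 Y' ∈ C := ind_eq_one_iff.1 hCbot
  have hdC : degree C (1, Y') = 2 := by
    rcases hC.2.2.1 (1, Y') with h0 | h0
    · exact absurd h0 (degree_ne_zero_of_mem hCfin hCmem (mem_horiz.2 (Or.inl rfl)))
    · exact h0
  have hformC2 := degree_formula C hCunit (1, Y')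
  simp only at hformC2
  have hC0' : ind C (horiz (1 - 1) Y') = 0 := by
    rw [show (1:ℤ) - 1 = 0 by ring]
    exact ind_of_not_mem (not_mem_of_out_left hC.2.1 _)
  have hCv : vert 1 (Y' - 1) ∈ C := by
    rw [← ind_eq_one_iff]
    omega
  -- degree of D at (1, Y')
  have hdD : degree D (1, Y') = 2 := by
    rcases hD.2.2.1 (1, Y') with h0 | h0
    · exact absurd h0 (degree_ne_zero_of_mem hDfin hvD (mem_vert.2 (Or.inl rfl)))
    · exact h0
  have hformD2 := degree_formula D hDunit (1, Y')
  simp only at hformD2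
  have hD0' : ind D (horiz (1 - 1) Y') = 0 := by
    rw [show (1:ℤ) - 1 = 0 by ring]
    exact ind_of_not_mem (not_mem_of_out_left hD.2.1 _)
  have hDv : vert 1 (Y' - 1) ∈ D := by
    rw [← ind_eq_one_iff]
    omega
  exact ⟨Y' - 1, hCv, hDv⟩

lemma shared_col1_vert {m n : ℤ} {C₁ C₂ : Set Edge} (h₁ : IsCycle m n C₁)
    (h₂ : IsCycle m n C₂) (hne : C₁ ≠ C₂) (hs : SameSignature m n C₁ C₂) :
    ∃ h, vert 1 h ∈ C₁ ∧ vert 1 h ∈ C₂ := by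
  obtain ⟨y₀, hy₀⟩ := exists_col1_vert h₁ h₂ hne hs
  have hinh : ∃ y, vert 1 y ∈ C₁ ∪ C₂ := ⟨y₀, sdiff_subset_union hy₀⟩
  have hbdd : ∃ b : ℤ, ∀ y, vert 1 y ∈ C₁ ∪ C₂ → y ≤ b := by
    refine ⟨n, ?_⟩
    intro y hy
    have : gridEdge m n (vert 1 y) := by
      rcases hy with h | h
      · exact h₁.2.1 _ h
      · exact h₂.2.1 _ h
    rw [gridEdge_vert_iff] at this
    omega
  obtain ⟨Y', hY'mem, hmax⟩ := Int.exists_greatest_of_bdd hbdd hinh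
  by_cases hin1 : vert 1 Y' ∈ C₁
  · by_cases hin2 : vert 1 Y' ∈ C₂
    · exact ⟨Y', hin1, hin2⟩
    · obtain ⟨h, hh2, hh1⟩ := shared_col1_aux h₂ h₁
        (fun a b hc => (hs a b hc).symm)
        (fun y hy => hmax y (Or.elim hy Or.inr Or.inl)) hin1 hin2
      exact ⟨h, hh1, hh2⟩
  · have hin2 : vert 1 Y' ∈ C₂ := by
      rcases hY'mem with h | h
      · exact absurd h hin1
      · exact h
    exact shared_col1_aux h₁ h₂ hs hmax hin2 hin1
lemma mem_mapE_iff {φ : V → V} (hinj : Function.Injective φ) {E : Set Edge} {e : Edge} :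
    Sym2.map φ e ∈ mapE φ E ↔ e ∈ E := by
  constructor
  · rintro ⟨e₀, he₀, heq⟩
    rwa [← Sym2.map.injective hinj heq]
  · exact mem_mapE_of_mem

lemma isCycle_mapE {m n M N : ℤ} {C : Set Edge} {φ ψ : V → V}
    (hinv : ∀ p, ψ (φ p) = p) (hinv2 : ∀ p, φ (ψ p) = p)
    (hedge : ∀ e, gridEdge m n e → gridEdge M N (Sym2.map φ e))
    (h : IsCycle m n C) : IsCycle M N (mapE φ C) := by
  rw [isCycle_iff] at h ⊢
  refine ⟨?_, shape_mapE hinv hinv2 h.2⟩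
  rintro e ⟨e₀, he₀, rfl⟩
  exact hedge e₀ (h.1 e₀ he₀)

lemma mapE_ne {φ : V → V} (hinj : Function.Injective φ) {C₁ C₂ : Set Edge}
    (h : C₁ ≠ C₂) : mapE φ C₁ ≠ mapE φ C₂ :=
  fun hc => h (Set.image_injective.2 (Sym2.map.injective hinj) hc)

lemma shared_colm_vert {m n : ℤ} {C₁ C₂ : Set Edge} (h₁ : IsCycle m n C₁)
    (h₂ : IsCycle m n C₂) (hne : C₁ ≠ C₂) (hs : SameSignature m n C₁ C₂) :
    ∃ h, vert m h ∈ C₁ ∧ vert m h ∈ C₂ := by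
  have hm2 : 2 ≤ m := cycle_two_le_m h₁
  set φ := mirX (m + 1) with hφdef
  have hinv := mirX_inv (m + 1)
  have hinj := mirX_injective (m + 1)
  have hedge : ∀ e, gridEdge m n e → gridEdge m n (Sym2.map φ e) :=
    fun e he => gridEdge_mirX he (by omega) (by omega)
  have h₁' : IsCycle m n (mapE φ C₁) := isCycle_mapE hinv hinv hedge h₁
  have h₂' : IsCycle m n (mapE φ C₂) := isCycle_mapE hinv hinv hedge h₂
  have hs' : SameSignature m n (mapE φ C₁) (mapE φ C₂) := by
    intro a b hc
    have hcell := mapE_cellEdges_mirX (m + 1) (m - a) b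
    rw [show m + 1 - (m - a) - 1 = a by ring] at hcell
    rw [cellCount_mapE hinj hcell, cellCount_mapE hinj hcell]
    obtain ⟨hc1, hc2, hc3, hc4⟩ := hc
    exact hs (m - a) b ⟨by omega, by omega, hc3, hc4⟩
  obtain ⟨h, hh1, hh2⟩ := shared_col1_vert h₁' h₂' (mapE_ne hinj hne) hs'
  have hkey : vert 1 h = Sym2.map φ (vert m h) := by
    rw [hφdef, mirX_vert, show m + 1 - m = 1 by ring]
  rw [hkey] at hh1 hh2
  exact ⟨h, (mem_mapE_iff hinj).1 hh1, (mem_mapE_iff hinj).1 hh2⟩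

lemma sameSignature_tpose {m n : ℤ} {C₁ C₂ : Set Edge} (hs : SameSignature m n C₁ C₂) :
    SameSignature n m (mapE tpose C₁) (mapE tpose C₂) := by
  intro a b hc
  have hcell := mapE_cellEdges_tpose b a
  rw [cellCount_mapE tpose_injective hcell, cellCount_mapE tpose_injective hcell]
  exact hs b a ⟨hc.2.2.1, hc.2.2.2, hc.1, hc.2.1⟩

lemma isCycle_tpose {m n : ℤ} {C : Set Edge} (h : IsCycle m n C) :
    IsCycle n m (mapE tpose C) :=
  isCycle_mapE tpose_inv tpose_inv (fun _ he => gridEdge_tpose he) h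
lemma gridEdge_mono_m {m n M : ℤ} {e : Edge} (h : gridEdge m n e) (hM : m ≤ M) :
    gridEdge M n e := by
  rcases gridEdge_cases h with ⟨x, y, rfl⟩ | ⟨x, y, rfl⟩
  · rw [gridEdge_horiz_iff] at h ⊢
    omega
  · rw [gridEdge_vert_iff] at h ⊢
    omega

lemma sdiff_comm (A B : Set Edge) : sdiff A B = sdiff B A := Set.union_comm _ _

lemma cellCount_remove {A : Set Edge} {r : Edge} (hr : r ∈ A) (hA : A.Finite) (α β : ℤ) :
    cellCount A α β = (if r ∈ cellEdges α β then 1 else 0) + cellCount (A \ {r}) α β := by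
  by_cases hrc : r ∈ cellEdges α β
  · have heq : A ∩ cellEdges α β = insert r ((A \ {r}) ∩ cellEdges α β) := by
      ext e
      simp only [Set.mem_inter_iff, Set.mem_insert_iff, Set.mem_diff, Set.mem_singleton_iff]
      constructor
      · rintro ⟨heA, hec⟩
        by_cases he : e = r
        · exact Or.inl he
        · exact Or.inr ⟨⟨heA, he⟩, hec⟩
      · rintro (rfl | ⟨⟨heA, -⟩, hec⟩)
        · exact ⟨hr, hrc⟩
        · exact ⟨heA, hec⟩
    have hni : r ∉ (A \ {r}) ∩ cellEdges α β := fun hc => hc.1.2 rfl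
    have hins := Set.ncard_insert_of_notMem hni ((hA.diff).inter_of_left _)
    rw [if_pos hrc, cellCount, heq, hins]
    have hcc : cellCount (A \ {r}) α β = ((A \ {r}) ∩ cellEdges α β).ncard := rfl
    rw [hcc]
    omega
  · have heq : A ∩ cellEdges α β = (A \ {r}) ∩ cellEdges α β := by
      ext e
      simp only [Set.mem_inter_iff, Set.mem_diff, Set.mem_singleton_iff]
      constructor
      · rintro ⟨heA, hec⟩
        refine ⟨⟨heA, ?_⟩, hec⟩
        rintro rfl
        exact hrc hec
      · rintro ⟨⟨heA, -⟩, hec⟩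
        exact ⟨heA, hec⟩
    rw [if_neg hrc, cellCount, heq, zero_add]
    rfl

lemma cellCount_union {A B : Set Edge} (h : Disjoint A B) (hA : A.Finite) (hB : B.Finite)
    (α β : ℤ) : cellCount (A ∪ B) α β = cellCount A α β + cellCount B α β := by
  rw [cellCount, cellCount, cellCount, Set.union_inter_distrib_right,
    Set.ncard_union_eq (h.mono Set.inter_subset_left Set.inter_subset_left)
      (hA.subset Set.inter_subset_left) (hB.subset Set.inter_subset_left)]

set_option maxHeartbeats 1000000 in
/-- the symmetric difference is unchanged by a simultaneous merge surgery. -/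
lemma sdiff_merge {G G' H H' : Set Edge} {r r' c₁ c₂ : Edge}
    (hrG : r ∈ G) (hrG' : r ∈ G') (hr'H : r' ∈ H) (hr'H' : r' ∈ H')
    (hdisj : ∀ e, e ∈ G ∪ G' → e ∈ H ∪ H' → False)
    (hc₁ : c₁ ∉ G ∪ G' ∪ H ∪ H') (hc₂ : c₂ ∉ G ∪ G' ∪ H ∪ H') :
    sdiff ((G \ {r}) ∪ (H \ {r'}) ∪ {c₁, c₂}) ((G' \ {r}) ∪ (H' \ {r'}) ∪ {c₁, c₂})
      = sdiff G G' ∪ sdiff H H' := by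
  ext e
  simp only [mem_sdiff_iff, Set.mem_union, Set.mem_diff, Set.mem_singleton_iff,
    Set.mem_insert_iff]
  by_cases he1 : e = c₁
  · subst he1
    simp only [Set.mem_union, not_or] at hc₁
    tauto
  · by_cases he2 : e = c₂
    · subst he2
      simp only [Set.mem_union, not_or] at hc₂
      tauto
    · by_cases her : e = r
      · subst her
        have h1 : e ∉ H := fun h => hdisj e (Or.inl hrG) (Or.inl h)
        have h2 : e ∉ H' := fun h => hdisj e (Or.inl hrG) (Or.inr h)
        clear hdisj hc₁ hc₂
        tauto
      · by_cases her' : e = r'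
        · subst her'
          have h1 : e ∉ G := fun h => hdisj e (Or.inl h) (Or.inl hr'H)
          have h2 : e ∉ G' := fun h => hdisj e (Or.inr h) (Or.inl hr'H)
          clear hdisj hc₁ hc₂
          tauto
        · have h1 : e ∈ G → e ∉ H' := fun h h' => hdisj e (Or.inl h) (Or.inr h')
          have h4 : e ∈ G' → e ∉ H := fun h h' => hdisj e (Or.inr h) (Or.inl h')
          have h6 : e ∈ H → e ∉ G' := fun h h' => hdisj e (Or.inr h') (Or.inl h)
          constructor
          · rintro (⟨h7, h8⟩ | ⟨h7, h8⟩)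
            · rcases h7 with (⟨hG, -⟩ | ⟨hH, -⟩) | (hc | hc)
              · exact Or.inl (Or.inl ⟨hG, fun hG' => h8 (Or.inl (Or.inl ⟨hG', her⟩))⟩)
              · exact Or.inr (Or.inl ⟨hH, fun hH' => h8 (Or.inl (Or.inr ⟨hH', her'⟩))⟩)
              · exact absurd hc he1
              · exact absurd hc he2
            · rcases h7 with (⟨hG, -⟩ | ⟨hH, -⟩) | (hc | hc)
              · exact Or.inl (Or.inr ⟨hG, fun hG' => h8 (Or.inl (Or.inl ⟨hG', her⟩))⟩)
              · exact Or.inr (Or.inr ⟨hH, fun hH' => h8 (Or.inl (Or.inr ⟨hH', her'⟩))⟩)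
              · exact absurd hc he1
              · exact absurd hc he2
          · rintro ((⟨hG, hG'⟩ | ⟨hG', hG⟩) | (⟨hH, hH'⟩ | ⟨hH', hH⟩))
            · refine Or.inl ⟨Or.inl (Or.inl ⟨hG, her⟩), ?_⟩
              rintro ((⟨h, -⟩ | ⟨h, -⟩) | (hc | hc))
              · exact hG' h
              · exact h1 hG h
              · exact he1 hc
              · exact he2 hc
            · refine Or.inr ⟨Or.inl (Or.inl ⟨hG', her⟩), ?_⟩
              rintro ((⟨h, -⟩ | ⟨h, -⟩) | (hc | hc))
              · exact hG h
              · exact h4 hG' h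
              · exact he1 hc
              · exact he2 hc
            · refine Or.inl ⟨Or.inl (Or.inr ⟨hH, her'⟩), ?_⟩
              rintro ((⟨h, -⟩ | ⟨h, -⟩) | (hc | hc))
              · exact h6 hH h
              · exact hH' h
              · exact he1 hc
              · exact he2 hc
            · refine Or.inr ⟨Or.inl (Or.inr ⟨hH', her'⟩), ?_⟩
              rintro ((⟨h, -⟩ | ⟨h, -⟩) | (hc | hc))
              · exact h1 h hH'
              · exact hH h
              · exact he1 hc
              · exact he2 hc

/-! block machinery -/

def blockMap (m : ℤ) (i : ℕ) : V → V :=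
  if Even i then trX (i * m) else mirX (i * m + m + 1)
def blockMapInv (m : ℤ) (i : ℕ) : V → V :=
  if Even i then trX (-(i * m)) else mirX (i * m + m + 1)
def pick (C₁ C₂ : Set Edge) (i : ℕ) : Set Edge := if Even i then C₁ else C₂
def faceCol (m : ℤ) (i : ℕ) : ℤ := if Even i then m else 1
def faceH (hm h1 : ℤ) (i : ℕ) : ℤ := if Even i then hm else h1

lemma blockMap_linv (m : ℤ) (i : ℕ) : ∀ p, blockMapInv m i (blockMap m i p) = p := by
  intro p
  unfold blockMap blockMapInv
  by_cases h : Even i <;> simp [h, trX, mirX]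

lemma blockMap_rinv (m : ℤ) (i : ℕ) : ∀ p, blockMap m i (blockMapInv m i p) = p := by
  intro p
  unfold blockMap blockMapInv
  by_cases h : Even i <;> simp [h, trX, mirX]

lemma blockMap_injective (m : ℤ) (i : ℕ) : Function.Injective (blockMap m i) :=
  fun a b hab => by rw [← blockMap_linv m i a, hab, blockMap_linv m i b]

lemma pick_succ (C₁ C₂ : Set Edge) (i : ℕ) : pick C₁ C₂ (i + 1) = pick C₂ C₁ i := by
  unfold pick
  by_cases h : Even i <;> simp [h, Nat.even_add_one]

lemma pick_cycle {m n : ℤ} {C₁ C₂ : Set Edge} (h₁ : IsCycle m n C₁) (h₂ : IsCycle m n C₂)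
    (i : ℕ) : IsCycle m n (pick C₁ C₂ i) := by
  unfold pick
  by_cases h : Even i <;> simp [h] <;> assumption

lemma mem_pick_of_both {C₁ C₂ : Set Edge} {e : Edge} (h1 : e ∈ C₁) (h2 : e ∈ C₂) (i : ℕ) :
    e ∈ pick C₁ C₂ i := by
  unfold pick
  by_cases h : Even i <;> simp [h] <;> assumption

lemma cc_pick {m n : ℤ} {C₁ C₂ : Set Edge} (hs : SameSignature m n C₁ C₂) (i : ℕ)
    {α β : ℤ} (hc : isCell m n α β) :
    cellCount (pick C₁ C₂ i) α β = cellCount (pick C₂ C₁ i) α β := by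
  unfold pick
  by_cases h : Even i <;> simp [h]
  · exact hs α β hc
  · exact (hs α β hc).symm

lemma ncard_sdiff_pick (C₁ C₂ : Set Edge) (i : ℕ) :
    (sdiff (pick C₁ C₂ i) (pick C₂ C₁ i)).ncard = (sdiff C₁ C₂).ncard := by
  unfold pick
  by_cases h : Even i <;> simp [h]
  rw [sdiff_comm]

lemma faceH_mem {C₁ C₂ : Set Edge} {m hm h1 : ℤ}
    (hhm : vert m hm ∈ C₁ ∧ vert m hm ∈ C₂) (hh1 : vert 1 h1 ∈ C₁ ∧ vert 1 h1 ∈ C₂)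
    (i : ℕ) : vert (faceCol m i) (faceH hm h1 i) ∈ C₁ ∧ vert (faceCol m i) (faceH hm h1 i) ∈ C₂ := by
  unfold faceCol faceH
  by_cases h : Even i <;> simp [h]
  · exact hhm
  · exact hh1

lemma blockMap_face_r (m : ℤ) (i : ℕ) (y : ℤ) :
    Sym2.map (blockMap m i) (vert (faceCol m i) y) = vert (((i:ℤ) + 1) * m) y := by
  by_cases h : Even i
  · rw [blockMap, faceCol, if_pos h, if_pos h, trX_vert, vert_inj]
    exact ⟨by ring, rfl⟩
  · rw [blockMap, faceCol, if_neg h, if_neg h, mirX_vert, vert_inj]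
    exact ⟨by ring, rfl⟩

lemma blockMap_face_l (m : ℤ) (k : ℕ) (y : ℤ) :
    Sym2.map (blockMap m (k + 1)) (vert (faceCol m k) y) = vert (((k:ℤ) + 1) * m + 1) y := by
  by_cases h : Even k
  · have h' : ¬ Even (k + 1) := by simp [Nat.even_add_one, h]
    rw [blockMap, faceCol, if_neg h', if_pos h, mirX_vert, vert_inj]
    refine ⟨?_, rfl⟩
    push_cast
    ring
  · have h' : Even (k + 1) := Nat.even_add_one.2 h
    rw [blockMap, faceCol, if_pos h', if_neg h, trX_vert, vert_inj]
    refine ⟨?_, rfl⟩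
    push_cast
    ring

lemma blockMap_vertex_bounds {m n : ℤ} {p : V} (i : ℕ) (hp : gridVertex m n p) :
    (i:ℤ) * m + 1 ≤ (blockMap m i p).1 ∧ (blockMap m i p).1 ≤ (i:ℤ) * m + m ∧
      (blockMap m i p).2 = p.2 ∧ 1 ≤ (blockMap m i p).2 ∧ (blockMap m i p).2 ≤ n := by
  obtain ⟨h1, h2, h3, h4⟩ := hp
  by_cases h : Even i
  · rw [blockMap, if_pos h]
    show (i:ℤ) * m + 1 ≤ p.1 + (i:ℤ) * m ∧ p.1 + (i:ℤ) * m ≤ (i:ℤ) * m + m ∧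
      p.2 = p.2 ∧ 1 ≤ p.2 ∧ p.2 ≤ n
    exact ⟨by omega, by omega, rfl, h3, h4⟩
  · rw [blockMap, if_neg h]
    show (i:ℤ) * m + 1 ≤ (i:ℤ) * m + m + 1 - p.1 ∧ (i:ℤ) * m + m + 1 - p.1 ≤ (i:ℤ) * m + m ∧
      p.2 = p.2 ∧ 1 ≤ p.2 ∧ p.2 ≤ n
    exact ⟨by omega, by omega, rfl, h3, h4⟩

lemma gridEdge_blockMap {m n M : ℤ} {e : Edge} (i : ℕ) (h : gridEdge m n e)
    (hm : 0 ≤ m) (hM : ((i:ℤ) + 1) * m ≤ M) :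
    gridEdge M n (Sym2.map (blockMap m i) e) := by
  have hi : (0:ℤ) ≤ (i:ℤ) := Int.ofNat_nonneg i
  by_cases hp : Even i
  · rw [blockMap, if_pos hp]
    exact gridEdge_trX h (by positivity) (by nlinarith)
  · rw [blockMap, if_neg hp]
    exact gridEdge_mirX h (by nlinarith) (by nlinarith)

lemma blockMap_cell {m : ℤ} (i : ℕ) {α β : ℤ} (hα1 : (i:ℤ) * m + 1 ≤ α)
    (hα2 : α + 1 ≤ (i:ℤ) * m + m) :
    ∃ α₀, 1 ≤ α₀ ∧ α₀ + 1 ≤ m ∧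
      (Sym2.map (blockMap m i)) '' cellEdges α₀ β = cellEdges α β := by
  by_cases h : Even i
  · refine ⟨α - (i:ℤ) * m, by omega, by omega, ?_⟩
    rw [blockMap, if_pos h, mapE_cellEdges_trX, show α - (i:ℤ)*m + (i:ℤ)*m = α by ring]
  · refine ⟨(i:ℤ) * m + m - α, by omega, by omega, ?_⟩
    rw [blockMap, if_neg h, mapE_cellEdges_mirX,
      show (i:ℤ)*m + m + 1 - ((i:ℤ)*m + m - α) - 1 = α by ring]
lemma ind_congr {A B : Set Edge} {e f : Edge} (h : e ∈ A ↔ f ∈ B) : ind A e = ind B f := by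
  unfold ind
  by_cases he : e ∈ A
  · rw [if_pos he, if_pos (h.1 he)]
  · rw [if_neg he, if_neg (fun hf => he (h.2 hf))]

lemma ind_zero_high {E : Set Edge} {q : ℤ} (hfoot : ∀ p ∈ VS E, p.1 ≤ q) {e : Edge} {x : V}
    (hx : x ∈ e) (hcol : q < x.1) : ind E e = 0 :=
  ind_of_not_mem (fun he => absurd (hfoot x ⟨e, he, hx⟩) (by omega))

lemma ind_zero_low {E : Set Edge} {q : ℤ} (hfoot : ∀ p ∈ VS E, q + 1 ≤ p.1) {e : Edge} {x : V}
    (hx : x ∈ e) (hcol : x.1 ≤ q) : ind E e = 0 :=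
  ind_of_not_mem (fun he => absurd (hfoot x ⟨e, he, hx⟩) (by omega))

lemma cellCount_zero_high {E : Set Edge} {q α β : ℤ} (hfoot : ∀ p ∈ VS E, p.1 ≤ q)
    (hα : q + 1 ≤ α) : cellCount E α β = 0 := by
  have w1 : ((α : ℤ), β) ∈ horiz α β := mem_horiz.2 (Or.inl rfl)
  have w2 : ((α : ℤ), β) ∈ vert α β := mem_vert.2 (Or.inl rfl)
  have w3 : ((α + 1 : ℤ), β) ∈ vert (α+1) β := mem_vert.2 (Or.inl rfl)
  have w4 : ((α : ℤ), β + 1) ∈ horiz α (β+1) := mem_horiz.2 (Or.inl rfl)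
  rw [cellCount_formula,
    ind_zero_high hfoot w1 (show q < α by omega),
    ind_zero_high hfoot w2 (show q < α by omega),
    ind_zero_high hfoot w3 (show q < α + 1 by omega),
    ind_zero_high hfoot w4 (show q < α by omega)]

lemma cellCount_zero_low {E : Set Edge} {q α β : ℤ} (hfoot : ∀ p ∈ VS E, q + 1 ≤ p.1)
    (hα : α + 1 ≤ q) : cellCount E α β = 0 := by
  have w1 : ((α : ℤ), β) ∈ horiz α β := mem_horiz.2 (Or.inl rfl)
  have w2 : ((α : ℤ), β) ∈ vert α β := mem_vert.2 (Or.inl rfl)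
  have w3 : ((α + 1 : ℤ), β) ∈ vert (α+1) β := mem_vert.2 (Or.inl rfl)
  have w4 : ((α : ℤ), β + 1) ∈ horiz α (β+1) := mem_horiz.2 (Or.inl rfl)
  rw [cellCount_formula,
    ind_zero_low hfoot w1 (show (α:ℤ) ≤ q by omega),
    ind_zero_low hfoot w2 (show (α:ℤ) ≤ q by omega),
    ind_zero_low hfoot w3 (show (α:ℤ) + 1 ≤ q by omega),
    ind_zero_low hfoot w4 (show (α:ℤ) ≤ q by omega)]

lemma horiz_lemma {m n : ℤ} {s : ℕ} {C₁ C₂ : Set Edge} (h₁ : IsCycle m n C₁)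
    (h₂ : IsCycle m n C₂) (hne : C₁ ≠ C₂) (hs : SameSignature m n C₁ C₂)
    (hcard : (sdiff C₁ C₂).ncard = s) (a : ℤ) (ha : 0 < a) :
    ∃ D₁ D₂ : Set Edge, IsCycle (a*m) n D₁ ∧ IsCycle (a*m) n D₂ ∧ D₁ ≠ D₂ ∧
      SameSignature (a*m) n D₁ D₂ ∧ ((sdiff D₁ D₂).ncard : ℤ) = a * s := by
  have hm2 : 2 ≤ m := cycle_two_le_m h₁
  have hma : m ≤ a * m := by nlinarith
  obtain ⟨ym, hym⟩ := shared_colm_vert h₁ h₂ hne hs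
  obtain ⟨y1, hy1⟩ := shared_col1_vert h₁ h₂ hne hs
  have hymb : 1 ≤ ym ∧ ym + 1 ≤ n := by
    have := h₁.2.1 _ hym.1
    rw [gridEdge_vert_iff] at this
    omega
  have hy1b : 1 ≤ y1 ∧ y1 + 1 ≤ n := by
    have := h₁.2.1 _ hy1.1
    rw [gridEdge_vert_iff] at this
    omega
  have hspos : s ≠ 0 := by
    intro h0
    rw [h0, Set.ncard_eq_zero ((gridEdge_finite m n).subset
      (fun e he => by
        rcases sdiff_subset_union he with h | h
        · exact h₁.2.1 e h
        · exact h₂.2.1 e h))] at hcard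
    obtain ⟨e, he⟩ := sdiff_nonempty_of_ne hne
    rw [hcard] at he
    exact he
  have main : ∀ k : ℕ, ((k:ℤ) + 1) ≤ a → ∃ G G' : Set Edge,
      IsCycle (a*m) n G ∧ IsCycle (a*m) n G' ∧
      (∀ p ∈ VS G, p.1 ≤ ((k:ℤ)+1)*m) ∧ (∀ p ∈ VS G', p.1 ≤ ((k:ℤ)+1)*m) ∧
      (sdiff G G').ncard = (k+1) * s ∧
      (∀ α β : ℤ, isCell (a*m) n α β → α + 1 ≤ ((k:ℤ)+1)*m →
        cellCount G α β = cellCount G' α β) ∧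
      (∀ y : ℤ, (vert (((k:ℤ)+1)*m) y ∈ G ↔ vert (faceCol m k) y ∈ pick C₁ C₂ k)) ∧
      (∀ y : ℤ, (vert (((k:ℤ)+1)*m) y ∈ G' ↔ vert (faceCol m k) y ∈ pick C₂ C₁ k)) := by
    intro k
    induction k with
    | zero =>
      intro _
      refine ⟨C₁, C₂, ?_, ?_, ?_, ?_, ?_, ?_, ?_, ?_⟩
      · exact isCycle_iff.2 ⟨fun e he => gridEdge_mono_m (h₁.2.1 e he) hma,
          (isCycle_iff.1 h₁).2⟩
      · exact isCycle_iff.2 ⟨fun e he => gridEdge_mono_m (h₂.2.1 e he) hma,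
          (isCycle_iff.1 h₂).2⟩
      · intro p hp
        have := (VS_grid h₁.2.1 hp).2.1
        push_cast
        omega
      · intro p hp
        have := (VS_grid h₂.2.1 hp).2.1
        push_cast
        omega
      · simpa using hcard
      · intro α β hc hα
        push_cast at hα
        exact hs α β ⟨hc.1, by omega, hc.2.2.1, hc.2.2.2⟩
      · intro y
        have h0 : Even 0 := Even.zero
        rw [faceCol, pick, if_pos h0, if_pos h0]
        norm_num
      · intro y
        have h0 : Even 0 := Even.zero
        rw [faceCol, pick, if_pos h0, if_pos h0]
        norm_num
    | succ k ih =>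
      intro hk2
      push_cast at hk2
      obtain ⟨G, G', hGcyc, hG'cyc, hGfoot, hG'foot, hsd, hcells, hfaceG, hfaceG'⟩ :=
        ih (by omega)
      have hk0 : (0:ℤ) ≤ (k:ℤ) := Int.ofNat_nonneg k
      set q : ℤ := ((k:ℤ)+1)*m with hqdef
      have hqm1 : (((k:ℤ)+1)+1)*m = q + m := by rw [hqdef]; ring
      have hqm2 : (((k+1:ℕ):ℤ)+1)*m = q + m := by push_cast; rw [hqdef]; ring
      have hq2 : 2 ≤ q := by rw [hqdef]; nlinarith
      have hqam : q + m ≤ a * m := by rw [hqdef]; nlinarith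
      set h : ℤ := faceH ym y1 k with hhdef
      have hshared : vert (faceCol m k) h ∈ C₁ ∧ vert (faceCol m k) h ∈ C₂ :=
        faceH_mem hym hy1 k
      have hhb : 1 ≤ h ∧ h + 1 ≤ n := by
        rw [hhdef, faceH]
        by_cases hek : Even k
        · rw [if_pos hek]; exact hymb
        · rw [if_neg hek]; exact hy1b
      set X : Set Edge := pick C₁ C₂ (k+1) with hXdef
      set X' : Set Edge := pick C₂ C₁ (k+1) with hX'def
      have hXk : X = pick C₂ C₁ k := pick_succ C₁ C₂ k
      have hX'k : X' = pick C₁ C₂ k := pick_succ C₂ C₁ k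
      set bm : V → V := blockMap m (k+1) with hbmdef
      have hbminj : Function.Injective bm := blockMap_injective m (k+1)
      have hXcyc : IsCycle m n X := pick_cycle h₁ h₂ (k+1)
      have hX'cyc : IsCycle m n X' := pick_cycle h₂ h₁ (k+1)
      have hedgebm : ∀ e, gridEdge m n e → gridEdge (a*m) n (Sym2.map bm e) := by
        intro e he
        refine gridEdge_blockMap (k+1) he (by omega) ?_
        push_cast
        nlinarith
      set H : Set Edge := mapE bm X with hHdef
      set H' : Set Edge := mapE bm X' with hH'def
      have hHcyc : IsCycle (a*m) n H :=
        isCycle_mapE (blockMap_linv m (k+1)) (blockMap_rinv m (k+1)) hedgebm hXcyc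
      have hH'cyc : IsCycle (a*m) n H' :=
        isCycle_mapE (blockMap_linv m (k+1)) (blockMap_rinv m (k+1)) hedgebm hX'cyc
      have hHfoot : ∀ p ∈ VS H, q + 1 ≤ p.1 ∧ p.1 ≤ q + m := by
        intro p hp
        rw [hHdef, VS_mapE] at hp
        obtain ⟨p₀, hp₀, rfl⟩ := hp
        have hb := blockMap_vertex_bounds (k+1) (m := m) (n := n)
          (VS_grid hXcyc.2.1 hp₀)
        rw [← hbmdef] at hb
        push_cast at hb
        rw [← hqdef] at hb
        omega
      have hH'foot : ∀ p ∈ VS H', q + 1 ≤ p.1 ∧ p.1 ≤ q + m := by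
        intro p hp
        rw [hH'def, VS_mapE] at hp
        obtain ⟨p₀, hp₀, rfl⟩ := hp
        have hb := blockMap_vertex_bounds (k+1) (m := m) (n := n)
          (VS_grid hX'cyc.2.1 hp₀)
        rw [← hbmdef] at hb
        push_cast at hb
        rw [← hqdef] at hb
        omega
      have hrG : vert q h ∈ G := (hfaceG h).2 (mem_pick_of_both hshared.1 hshared.2 k)
      have hrG' : vert q h ∈ G' := (hfaceG' h).2 (mem_pick_of_both hshared.2 hshared.1 k)
      have hfl2 : ∀ y, Sym2.map bm (vert (faceCol m k) y) = vert (q+1) y := by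
        intro y
        rw [hbmdef, blockMap_face_l, hqdef]
      have hXface : vert (faceCol m k) h ∈ X := by
        rw [hXk]
        exact mem_pick_of_both hshared.2 hshared.1 k
      have hX'face : vert (faceCol m k) h ∈ X' := by
        rw [hX'k]
        exact mem_pick_of_both hshared.1 hshared.2 k
      have hr'H : vert (q+1) h ∈ H := by
        rw [← hfl2 h]
        exact mem_mapE_of_mem hXface
      have hr'H' : vert (q+1) h ∈ H' := by
        rw [← hfl2 h]
        exact mem_mapE_of_mem hX'face
      have hdisjGH : ∀ p, p ∈ VS G → p ∉ VS H := by
        intro p hp hpH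
        have h5 := hGfoot p hp
        have h6 := (hHfoot p hpH).1
        omega
      have hdisjG'H' : ∀ p, p ∈ VS G' → p ∉ VS H' := by
        intro p hp hpH
        have h5 := hG'foot p hp
        have h6 := (hH'foot p hpH).1
        omega
      have hdisjE : ∀ e, e ∈ G ∪ G' → e ∈ H ∪ H' → False := by
        intro e heG heH
        obtain ⟨x, hx⟩ := edge_exists_mem e
        have h5 : x.1 ≤ q := by
          rcases heG with hh | hh
          · exact hGfoot x ⟨e, hh, hx⟩
          · exact hG'foot x ⟨e, hh, hx⟩
        have h6 : q + 1 ≤ x.1 := by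
          rcases heH with hh | hh
          · exact (hHfoot x ⟨e, hh, hx⟩).1
          · exact (hH'foot x ⟨e, hh, hx⟩).1
        omega
      have hcnotin : ∀ y', horiz q y' ∉ G ∪ G' ∪ H ∪ H' := by
        intro y' hc
        rcases hc with ((hh | hh) | hh) | hh
        · have h5 : q + 1 ≤ q := hGfoot _ (mem_VS hh (mem_horiz.2 (Or.inr rfl)))
          omega
        · have h5 : q + 1 ≤ q := hG'foot _ (mem_VS hh (mem_horiz.2 (Or.inr rfl)))
          omega
        · have h5 : q + 1 ≤ q := (hHfoot _ (mem_VS hh (mem_horiz.2 (Or.inl rfl)))).1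
          omega
        · have h5 : q + 1 ≤ q := (hH'foot _ (mem_VS hh (mem_horiz.2 (Or.inl rfl)))).1
          omega
      set Gn : Set Edge := (G \ {vert q h}) ∪ (H \ {vert (q+1) h})
        ∪ {horiz q h, horiz q (h+1)} with hGndef
      set G'n : Set Edge := (G' \ {vert q h}) ∪ (H' \ {vert (q+1) h})
        ∪ {horiz q h, horiz q (h+1)} with hG'ndef
      have hmerge := merge_shape (cycle_finite hGcyc) (cycle_finite hHcyc)
        (fun e he => unit_not_diag (cycle_unit hGcyc e he))
        (fun e he => unit_not_diag (cycle_unit hHcyc e he))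
        (isCycle_iff.1 hGcyc).2 (isCycle_iff.1 hHcyc).2 hdisjGH
        (u := (q, h)) (v := (q, h+1)) (u' := (q+1, h)) (v' := (q+1, h+1))
        hrG hr'H (by simp) (by simp)
      have hmerge' := merge_shape (cycle_finite hG'cyc) (cycle_finite hH'cyc)
        (fun e he => unit_not_diag (cycle_unit hG'cyc e he))
        (fun e he => unit_not_diag (cycle_unit hH'cyc e he))
        (isCycle_iff.1 hG'cyc).2 (isCycle_iff.1 hH'cyc).2 hdisjG'H'
        (u := (q, h)) (v := (q, h+1)) (u' := (q+1, h)) (v' := (q+1, h+1))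
        hrG' hr'H' (by simp) (by simp)
      have hconn1 : gridEdge (a*m) n (horiz q h) := by
        rw [gridEdge_horiz_iff]
        exact ⟨by omega, by omega, hhb.1, by omega⟩
      have hconn2 : gridEdge (a*m) n (horiz q (h+1)) := by
        rw [gridEdge_horiz_iff]
        exact ⟨by omega, by omega, by omega, by omega⟩
      have hGncyc : IsCycle (a*m) n Gn := by
        rw [isCycle_iff]
        constructor
        · intro e he
          rw [hGndef] at he
          rcases he with (⟨he, -⟩ | ⟨he, -⟩) | (rfl | rfl)
          · exact hGcyc.2.1 e he
          · exact hHcyc.2.1 e he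
          · exact hconn1
          · exact hconn2
        · exact hmerge.1
      have hG'ncyc : IsCycle (a*m) n G'n := by
        rw [isCycle_iff]
        constructor
        · intro e he
          rw [hG'ndef] at he
          rcases he with (⟨he, -⟩ | ⟨he, -⟩) | (rfl | rfl)
          · exact hG'cyc.2.1 e he
          · exact hH'cyc.2.1 e he
          · exact hconn1
          · exact hconn2
        · exact hmerge'.1
      have hGnfoot : ∀ p ∈ VS Gn, p.1 ≤ q + m := by
        intro p hp
        rcases hmerge.2 hp with hh | hh
        · have := hGfoot p hh
          omega
        · exact (hHfoot p hh).2
      have hG'nfoot : ∀ p ∈ VS G'n, p.1 ≤ q + m := by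
        intro p hp
        rcases hmerge'.2 hp with hh | hh
        · have := hG'foot p hh
          omega
        · exact (hH'foot p hh).2
      have hsdnew : sdiff Gn G'n = sdiff G G' ∪ sdiff H H' :=
        sdiff_merge hrG hrG' hr'H hr'H' hdisjE (hcnotin h) (hcnotin (h+1))
      have hsdHH' : sdiff H H' = mapE bm (sdiff X X') := by
        rw [hHdef, hH'def]
        exact (mapE_sdiff hbminj X X').symm
      have hcardnew : (sdiff Gn G'n).ncard = (k+1+1) * s := by
        have hdisjsd : Disjoint (sdiff G G') (sdiff H H') := by
          rw [Set.disjoint_left]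
          intro e he1 he2
          exact hdisjE e (sdiff_subset_union he1) (sdiff_subset_union he2)
        have hfin1 : (sdiff G G').Finite :=
          ((cycle_finite hGcyc).union (cycle_finite hG'cyc)).subset sdiff_subset_union
        have hfin2 : (sdiff H H').Finite :=
          ((cycle_finite hHcyc).union (cycle_finite hH'cyc)).subset sdiff_subset_union
        rw [hsdnew, Set.ncard_union_eq hdisjsd hfin1 hfin2, hsd, hsdHH',
          ncard_mapE hbminj, hXdef, hX'def, ncard_sdiff_pick, hcard]
        ring
      have hcellsnew : ∀ α β : ℤ, isCell (a*m) n α β → α + 1 ≤ q + m →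
          cellCount Gn α β = cellCount G'n α β := by
        intro α β hcell hαq
        have hd1 : Disjoint (G \ {vert q h}) (H \ {vert (q+1) h}) := by
          rw [Set.disjoint_left]
          intro e he1 he2
          exact hdisjE e (Or.inl he1.1) (Or.inl he2.1)
        have hd1' : Disjoint (G' \ {vert q h}) (H' \ {vert (q+1) h}) := by
          rw [Set.disjoint_left]
          intro e he1 he2
          exact hdisjE e (Or.inr he1.1) (Or.inr he2.1)
        have hcpair : ∀ (Y Y' : Set Edge), (∀ y', horiz q y' ∉ Y) → (∀ y', horiz q y' ∉ Y') →
            Disjoint ((Y \ {vert q h}) ∪ (Y' \ {vert (q+1) h}))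
              ({horiz q h, horiz q (h+1)} : Set Edge) := by
          intro Y Y' hY hY'
          rw [Set.disjoint_right]
          rintro e (rfl | rfl) <;> rintro (⟨he, -⟩ | ⟨he, -⟩)
          · exact hY h he
          · exact hY' h he
          · exact hY (h+1) he
          · exact hY' (h+1) he
        have hccGn : cellCount Gn α β = cellCount (G \ {vert q h}) α β
            + cellCount (H \ {vert (q+1) h}) α β
            + cellCount ({horiz q h, horiz q (h+1)} : Set Edge) α β := by
          rw [hGndef, cellCount_union (hcpair G H
              (fun y' hc => hcnotin y' (Or.inl (Or.inl (Or.inl hc))))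
              (fun y' hc => hcnotin y' (Or.inl (Or.inr hc))))
              (((cycle_finite hGcyc).diff).union ((cycle_finite hHcyc).diff)) (by simp),
            cellCount_union hd1 ((cycle_finite hGcyc).diff) ((cycle_finite hHcyc).diff)]
        have hccG'n : cellCount G'n α β = cellCount (G' \ {vert q h}) α β
            + cellCount (H' \ {vert (q+1) h}) α β
            + cellCount ({horiz q h, horiz q (h+1)} : Set Edge) α β := by
          rw [hG'ndef, cellCount_union (hcpair G' H'
              (fun y' hc => hcnotin y' (Or.inl (Or.inl (Or.inr hc))))
              (fun y' hc => hcnotin y' (Or.inr hc)))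
              (((cycle_finite hG'cyc).diff).union ((cycle_finite hH'cyc).diff)) (by simp),
            cellCount_union hd1' ((cycle_finite hG'cyc).diff) ((cycle_finite hH'cyc).diff)]
        have hremG := cellCount_remove hrG (cycle_finite hGcyc) α β
        have hremG' := cellCount_remove hrG' (cycle_finite hG'cyc) α β
        have hremH := cellCount_remove hr'H (cycle_finite hHcyc) α β
        have hremH' := cellCount_remove hr'H' (cycle_finite hH'cyc) α β
        have hmainzone : cellCount G α β + cellCount H α β
            = cellCount G' α β + cellCount H' α β := by
          rcases lt_trichotomy α q with hz | hz | hz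
          · have hccH : cellCount H α β = 0 :=
              cellCount_zero_low (fun p hp => (hHfoot p hp).1) (by omega)
            have hccH' : cellCount H' α β = 0 :=
              cellCount_zero_low (fun p hp => (hH'foot p hp).1) (by omega)
            have := hcells α β hcell (by omega)
            omega
          · have hGfootα : ∀ p ∈ VS G, p.1 ≤ α := fun p hp => by
              rw [hz]; exact hGfoot p hp
            have hG'footα : ∀ p ∈ VS G', p.1 ≤ α := fun p hp => by
              rw [hz]; exact hG'foot p hp
            have hHfootα : ∀ p ∈ VS H, α + 1 ≤ p.1 := fun p hp => by
              rw [hz]; exact (hHfoot p hp).1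
            have hH'footα : ∀ p ∈ VS H', α + 1 ≤ p.1 := fun p hp => by
              rw [hz]; exact (hH'foot p hp).1
            have w1 : ((α + 1 : ℤ), β) ∈ horiz α β := mem_horiz.2 (Or.inr rfl)
            have w2 : ((α + 1 : ℤ), β) ∈ vert (α+1) β := mem_vert.2 (Or.inl rfl)
            have w3 : ((α + 1 : ℤ), β + 1) ∈ horiz α (β+1) := mem_horiz.2 (Or.inr rfl)
            have w4 : ((α : ℤ), β) ∈ horiz α β := mem_horiz.2 (Or.inl rfl)
            have w5 : ((α : ℤ), β) ∈ vert α β := mem_vert.2 (Or.inl rfl)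
            have w6 : ((α : ℤ), β + 1) ∈ horiz α (β+1) := mem_horiz.2 (Or.inl rfl)
            have hccG : cellCount G α β = ind G (vert α β) := by
              rw [cellCount_formula,
                ind_zero_high hGfootα w1 (show α < α + 1 by omega),
                ind_zero_high hGfootα w2 (show α < α + 1 by omega),
                ind_zero_high hGfootα w3 (show α < α + 1 by omega)]
              omega
            have hccG' : cellCount G' α β = ind G' (vert α β) := by
              rw [cellCount_formula,
                ind_zero_high hG'footα w1 (show α < α + 1 by omega),
                ind_zero_high hG'footα w2 (show α < α + 1 by omega),
                ind_zero_high hG'footα w3 (show α < α + 1 by omega)]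
              omega
            have hccH : cellCount H α β = ind H (vert (α+1) β) := by
              rw [cellCount_formula,
                ind_zero_low hHfootα w4 (show (α:ℤ) ≤ α by omega),
                ind_zero_low hHfootα w5 (show (α:ℤ) ≤ α by omega),
                ind_zero_low hHfootα w6 (show (α:ℤ) ≤ α by omega)]
              omega
            have hccH' : cellCount H' α β = ind H' (vert (α+1) β) := by
              rw [cellCount_formula,
                ind_zero_low hH'footα w4 (show (α:ℤ) ≤ α by omega),
                ind_zero_low hH'footα w5 (show (α:ℤ) ≤ α by omega),
                ind_zero_low hH'footα w6 (show (α:ℤ) ≤ α by omega)]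
              omega
            have hfaceH : ∀ y, (vert (q+1) y ∈ H ↔ vert (faceCol m k) y ∈ pick C₂ C₁ k) := by
              intro y
              rw [← hfl2 y, hHdef, mem_mapE_iff hbminj, ← hXk]
            have hfaceH' : ∀ y, (vert (q+1) y ∈ H' ↔ vert (faceCol m k) y ∈ pick C₁ C₂ k) := by
              intro y
              rw [← hfl2 y, hH'def, mem_mapE_iff hbminj, ← hX'k]
            have e1 : ind G (vert α β) = ind (pick C₁ C₂ k) (vert (faceCol m k) β) :=
              ind_congr (by rw [hz]; exact hfaceG β)
            have e2 : ind G' (vert α β) = ind (pick C₂ C₁ k) (vert (faceCol m k) β) :=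
              ind_congr (by rw [hz]; exact hfaceG' β)
            have e3 : ind H (vert (α+1) β) = ind (pick C₂ C₁ k) (vert (faceCol m k) β) :=
              ind_congr (by rw [hz]; exact hfaceH β)
            have e4 : ind H' (vert (α+1) β) = ind (pick C₁ C₂ k) (vert (faceCol m k) β) :=
              ind_congr (by rw [hz]; exact hfaceH' β)
            omega
          · have hccG : cellCount G α β = 0 :=
              cellCount_zero_high hGfoot (by omega)
            have hccG' : cellCount G' α β = 0 :=
              cellCount_zero_high hG'foot (by omega)
            obtain ⟨α₀, hα₀1, hα₀2, hcellmap⟩ := blockMap_cell (m := m) (k+1) (α := α) (β := β)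
              (by push_cast; rw [← hqdef]; omega) (by push_cast; rw [← hqdef]; omega)
            have hccH : cellCount H α β = cellCount X α₀ β := by
              rw [hHdef]
              exact cellCount_mapE hbminj (by rw [← hbmdef] at hcellmap; exact hcellmap) X
            have hccH' : cellCount H' α β = cellCount X' α₀ β := by
              rw [hH'def]
              exact cellCount_mapE hbminj (by rw [← hbmdef] at hcellmap; exact hcellmap) X'
            have hXX'cc : cellCount X α₀ β = cellCount X' α₀ β := by
              rw [hXdef, hX'def]
              exact cc_pick hs (k+1) ⟨hα₀1, hα₀2, hcell.2.2.1, hcell.2.2.2⟩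
            omega
        omega
      have hfr2 : ∀ y, Sym2.map bm (vert (faceCol m (k+1)) y) = vert (q + m) y := by
        intro y
        rw [hbmdef, blockMap_face_r, vert_inj, hqdef]
        refine ⟨by push_cast; ring, rfl⟩
      have hfaceGn : ∀ y : ℤ,
          (vert ((((k+1 : ℕ) : ℤ) + 1) * m) y ∈ Gn ↔
            vert (faceCol m (k+1)) y ∈ pick C₁ C₂ (k+1)) := by
        intro y
        rw [hqm2]
        constructor
        · intro hmem
          rw [hGndef] at hmem
          rcases hmem with (⟨hH, -⟩ | ⟨hH, -⟩) | (hc | hc)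
          · exfalso
            have h5 : q + m ≤ q := hGfoot _ (mem_VS hH (mem_vert.2 (Or.inl rfl)))
            omega
          · rw [← hfr2 y, hHdef, mem_mapE_iff hbminj, hXdef] at hH
            exact hH
          · exact absurd hc.symm horiz_ne_vert
          · exact absurd hc.symm horiz_ne_vert
        · intro hmem
          rw [hGndef]
          refine Or.inl (Or.inr ⟨?_, ?_⟩)
          · rw [hHdef, ← hfr2 y]
            refine mem_mapE_of_mem ?_
            rw [hXdef]
            exact hmem
          · intro heq
            rw [Set.mem_singleton_iff, vert_inj] at heq
            omega
      have hfaceG'n : ∀ y : ℤ,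
          (vert ((((k+1 : ℕ) : ℤ) + 1) * m) y ∈ G'n ↔
            vert (faceCol m (k+1)) y ∈ pick C₂ C₁ (k+1)) := by
        intro y
        rw [hqm2]
        constructor
        · intro hmem
          rw [hG'ndef] at hmem
          rcases hmem with (⟨hH, -⟩ | ⟨hH, -⟩) | (hc | hc)
          · exfalso
            have h5 : q + m ≤ q := hG'foot _ (mem_VS hH (mem_vert.2 (Or.inl rfl)))
            omega
          · rw [← hfr2 y, hH'def, mem_mapE_iff hbminj, hX'def] at hH
            exact hH
          · exact absurd hc.symm horiz_ne_vert
          · exact absurd hc.symm horiz_ne_vert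
        · intro hmem
          rw [hG'ndef]
          refine Or.inl (Or.inr ⟨?_, ?_⟩)
          · rw [hH'def, ← hfr2 y]
            refine mem_mapE_of_mem ?_
            rw [hX'def]
            exact hmem
          · intro heq
            rw [Set.mem_singleton_iff, vert_inj] at heq
            omega
      refine ⟨Gn, G'n, hGncyc, hG'ncyc, ?_, ?_, hcardnew, ?_, hfaceGn, hfaceG'n⟩
      · intro p hp
        rw [hqm2]
        exact hGnfoot p hp
      · intro p hp
        rw [hqm2]
        exact hG'nfoot p hp
      · intro α β hcell hα
        rw [hqm2] at hα
        exact hcellsnew α β hcell hα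
  obtain ⟨G, G', hG, hG', -, -, hcardGG, hcells, -, -⟩ := main (a - 1).toNat (by omega)
  have hone : (((a - 1).toNat : ℤ) + 1) = a := by omega
  refine ⟨G, G', hG, hG', ?_, ?_, ?_⟩
  · intro heq
    rw [heq] at hcardGG
    have hz : sdiff G' G' = ∅ := by
      rw [sdiff]
      simp
    rw [hz, Set.ncard_empty] at hcardGG
    exact Nat.mul_ne_zero (by omega) hspos hcardGG.symm
  · intro α β hc
    refine hcells α β hc ?_
    rw [hone]
    exact hc.2.1
  · rw [hcardGG]
    push_cast
    rw [hone]

theorem stmt19 (m n : ℤ) (s : ℕ) (C₁ C₂ : Set Edge) (h₁ : IsCycle m n C₁)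
    (h₂ : IsCycle m n C₂) (hne : C₁ ≠ C₂) (hs : SameSignature m n C₁ C₂)
    (hcard : (sdiff C₁ C₂).ncard = s) (a b : ℤ) (ha : 0 < a) (hb : 0 < b) :
    ∃ D₁ D₂ : Set Edge, IsCycle (a * m) (b * n) D₁ ∧ IsCycle (a * m) (b * n) D₂ ∧
      D₁ ≠ D₂ ∧ SameSignature (a * m) (b * n) D₁ D₂ ∧
      ((sdiff D₁ D₂).ncard : ℤ) = a * b * s := by
  obtain ⟨E₁, E₂, hE₁, hE₂, hEne, hEsig, hEcard⟩ := horiz_lemma h₁ h₂ hne hs hcard a ha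
  have t₁ := isCycle_tpose hE₁
  have t₂ := isCycle_tpose hE₂
  have tsig := sameSignature_tpose hEsig
  have tne : mapE tpose E₁ ≠ mapE tpose E₂ := mapE_ne tpose_injective hEne
  have tcard : (sdiff (mapE tpose E₁) (mapE tpose E₂)).ncard = (sdiff E₁ E₂).ncard := by
    rw [← mapE_sdiff tpose_injective, ncard_mapE tpose_injective]
  obtain ⟨F₁, F₂, hF₁, hF₂, hFne, hFsig, hFcard⟩ := horiz_lemma t₁ t₂ tne tsig rfl b hb
  refine ⟨mapE tpose F₁, mapE tpose F₂, isCycle_tpose hF₁, isCycle_tpose hF₂,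
    mapE_ne tpose_injective hFne, sameSignature_tpose hFsig, ?_⟩
  have hback : (sdiff (mapE tpose F₁) (mapE tpose F₂)).ncard = (sdiff F₁ F₂).ncard := by
    rw [← mapE_sdiff tpose_injective, ncard_mapE tpose_injective]
  rw [hback, hFcard, tcard, hEcard]
  ring

end Slitherlink
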